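/- arXiv:2009.02788 — 9 statements merged into one kernel-verified Lean document; each statement's English description precedes it below -/
import Mathlib

section
/- Let P : ℂ → ℂ be a monic polynomial of degree D ≥ 2. For every z ∈ ℂ, the sequence n ↦ D^{-n} · log⁺ |P^{∘n}(z)| converges to a nonnegative real limit G(z) (the Green's function of P), where log⁺ t = max(log t, 0). -/
/-!
A monic `P` of degree `D` satisfies `P w ~ w ^ D` at infinity, so `log⁺ ‖P w‖ - D * log⁺ ‖w‖`
is bounded near infinity, hence (by continuity) on all of `ℂ`, say by `C`. Consecutive terms of
`log⁺ ‖P^[n] z‖ / D ^ n` then differ by at most `C / D ^ (n + 1)`, so the sequence is Cauchy; its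
limit is nonnegative as a limit of nonnegative terms.
-/

open Filter Topology Bornology
open scoped Real

namespace Real

theorem abs_posLog_sub_posLog_le_log {x y c : ℝ} (hc : 1 ≤ c) (hx : 0 ≤ x) (hy : 0 ≤ y)
    (hxy : x ≤ c * y) (hyx : y ≤ c * x) : |log⁺ x - log⁺ y| ≤ log c := by
  have bound {a b : ℝ} (ha : 0 ≤ a) (hab : a ≤ c * b) : log⁺ a ≤ log c + log⁺ b :=
    calc log⁺ a ≤ log⁺ (c * b) := posLog_le_posLog ha hab
      _ ≤ log⁺ c + log⁺ b := posLog_mul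
      _ = log c + log⁺ b := by rw [posLog_eq_log (by rwa [abs_of_nonneg (by linarith)])]
  rw [abs_sub_le_iff]
  constructor <;> linarith [bound hx hxy, bound hy hyx]

end Real

theorem Continuous.exists_forall_norm_le_of_eventually_cocompact {X E : Type*}
    [TopologicalSpace X] [SeminormedAddCommGroup E] {f : X → E} (hf : Continuous f) {C : ℝ}
    (hC : ∀ᶠ x in cocompact X, ‖f x‖ ≤ C) : ∃ C', ∀ x, ‖f x‖ ≤ C' := by
  obtain ⟨K, hK, hKc⟩ := mem_cocompact.mp hC
  obtain ⟨C₀, hC₀⟩ := hK.exists_bound_of_continuousOn hf.continuousOn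
  refine ⟨max C₀ C, fun x => ?_⟩
  by_cases hx : x ∈ K
  · exact le_max_of_le_left (hC₀ x hx)
  · exact le_max_of_le_right (hKc hx)

namespace Polynomial

variable {𝕜 : Type*} [NormedField 𝕜] {P : 𝕜[X]}

theorem Monic.eventually_norm_eval_le_two_mul (hP : P.Monic) :
    ∀ᶠ w in cobounded 𝕜, ‖P.eval w‖ ≤ 2 * ‖w‖ ^ P.natDegree ∧
      ‖w‖ ^ P.natDegree ≤ 2 * ‖P.eval w‖ := by
  have hequiv := P.isEquivalent_cobounded_leading_monomial
  simp only [hP.leadingCoeff, one_mul] at hequiv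
  filter_upwards [hequiv.isLittleO.def (by norm_num : (0 : ℝ) < 1 / 2)] with w hw
  rw [Pi.sub_apply, norm_pow] at hw
  have h₁ := norm_sub_norm_le (P.eval w) (w ^ P.natDegree)
  have h₂ := norm_sub_norm_le (w ^ P.natDegree) (P.eval w)
  rw [norm_sub_rev, norm_pow] at h₂
  rw [norm_pow] at h₁
  constructor <;> nlinarith [pow_nonneg (norm_nonneg w) P.natDegree]

theorem Monic.exists_abs_posLog_norm_eval_sub_le [ProperSpace 𝕜] (hP : P.Monic) :
    ∃ C, ∀ w : 𝕜, |log⁺ ‖P.eval w‖ - P.natDegree * log⁺ ‖w‖| ≤ C := by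
  have hcont : Continuous fun w : 𝕜 => log⁺ ‖P.eval w‖ - P.natDegree * log⁺ ‖w‖ := by
    fun_prop
  have hfar : ∀ᶠ w in cocompact 𝕜,
      ‖log⁺ ‖P.eval w‖ - P.natDegree * log⁺ ‖w‖‖ ≤ Real.log 2 := by
    rw [← Metric.cobounded_eq_cocompact]
    filter_upwards [hP.eventually_norm_eval_le_two_mul] with w ⟨hle, hge⟩
    rw [Real.norm_eq_abs, ← Real.posLog_pow]
    exact Real.abs_posLog_sub_posLog_le_log one_le_two (norm_nonneg _) (by positivity) hle hge
  simpa only [Real.norm_eq_abs] using hcont.exists_forall_norm_le_of_eventually_cocompact hfar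

end Polynomial

theorem cauchySeq_div_pow_iterate {α : Type*} (f : α → α) (h : α → ℝ) {d C : ℝ} (hd : 1 < d)
    (hC : ∀ x, |h (f x) - d * h x| ≤ C) (x : α) :
    CauchySeq fun n => h (f^[n] x) / d ^ n := by
  have hd₀ : 0 < d := by linarith
  refine cauchySeq_of_le_geometric d⁻¹ (C / d) (inv_lt_one_of_one_lt₀ hd) fun n => ?_
  have hstep : h (f^[n] x) / d ^ n - h (f^[n + 1] x) / d ^ (n + 1)
      = -((h (f (f^[n] x)) - d * h (f^[n] x)) / d ^ (n + 1)) := by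
    rw [Function.iterate_succ_apply']
    field_simp
    ring
  calc dist (h (f^[n] x) / d ^ n) (h (f^[n + 1] x) / d ^ (n + 1))
      = |h (f (f^[n] x)) - d * h (f^[n] x)| / d ^ (n + 1) := by
        rw [Real.dist_eq, hstep, abs_neg, abs_div, abs_of_pos (pow_pos hd₀ _)]
    _ ≤ C / d ^ (n + 1) := by gcongr; exact hC _
    _ = C / d * d⁻¹ ^ n := by rw [inv_pow]; field_simp; ring

/-- For a monic polynomial `P` of degree `D ≥ 2`, the sequence
`n ↦ D^{-n} · log⁺ |P^{∘n}(z)|` converges to a nonnegative limit (the Green's function). -/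
theorem green_function_exists (D : ℕ) (hD : 2 ≤ D) (P : Polynomial ℂ)
    (hmonic : P.Monic) (hdeg : P.natDegree = D) (z : ℂ) :
    ∃ G : ℝ, 0 ≤ G ∧
      Tendsto (fun n : ℕ =>
          (1 / (D : ℝ) ^ n) *
            max (Real.log ‖(fun w => P.eval w)^[n] z‖) 0)
        atTop (𝓝 G) := by
  obtain ⟨C, hC⟩ := hmonic.exists_abs_posLog_norm_eval_sub_le
  have hD₁ : (1 : ℝ) < D := by exact_mod_cast hD
  obtain ⟨G, hG⟩ := cauchySeq_tendsto_of_complete <|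
    cauchySeq_div_pow_iterate (fun w => P.eval w) (fun w => log⁺ ‖w‖) hD₁
      (by simpa only [hdeg] using hC) z
  refine ⟨G, ge_of_tendsto' hG fun n => div_nonneg Real.posLog_nonneg (by positivity),
    hG.congr fun n => ?_⟩
  rw [Real.posLog_apply, max_comm, one_div_mul_eq_div]
end

section
/- Let P : ℂ → ℂ be a monic polynomial of degree D ≥ 2 and let G(z) := lim_{n→∞} D^{-n} · log⁺ |P^{∘n}(z)| be its Green's function. Then G is continuous on ℂ. -/
/-! Since `|P z| ≍ |z|ᴰ` at infinity and `P` is continuous, `log⁺ |P z| - D log⁺ |z|` is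
bounded on `ℂ`, say by `C`. Hence consecutive terms of `D⁻ⁿ log⁺ |Pⁿ z|` differ by at most `C D⁻ⁿ⁻¹`
uniformly in `z`, so these continuous functions converge uniformly, and their limit `G` is
continuous. -/

open Filter Topology Bornology Asymptotics Polynomial Real

theorem tendstoUniformly_of_dist_le_geometric {α β : Type*} [PseudoMetricSpace β]
    {F : ℕ → α → β} {G : α → β} {r C : ℝ} (hr₀ : 0 ≤ r) (hr : r < 1)
    (hF : ∀ n x, dist (F n x) (F (n + 1) x) ≤ C * r ^ n)
    (hG : ∀ x, Tendsto (fun n ↦ F n x) atTop (𝓝 (G x))) :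
    TendstoUniformly F G atTop := by
  have hlim : Tendsto (fun n ↦ C * r ^ n / (1 - r)) atTop (𝓝 0) := by
    simpa using ((tendsto_pow_atTop_nhds_zero_of_lt_one hr₀ hr).const_mul C).div_const (1 - r)
  rw [Metric.tendstoUniformly_iff]
  intro ε hε
  filter_upwards [hlim.eventually_lt_const hε] with n hn x
  rw [dist_comm]
  exact (dist_le_of_le_geometric_of_tendsto r C hr (fun n ↦ hF n x) (hG x) n).trans_lt hn

theorem Continuous.exists_forall_norm_le_of_eventually_cobounded {X E : Type*}
    [PseudoMetricSpace X] [ProperSpace X] [SeminormedAddCommGroup E] {h : X → E}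
    (hh : Continuous h) {C : ℝ} (hC : ∀ᶠ x in cobounded X, ‖h x‖ ≤ C) :
    ∃ C', ∀ x, ‖h x‖ ≤ C' := by
  have hbdd : IsBounded {x | ¬‖h x‖ ≤ C} := isBounded_def.2 <| by
    simp only [Set.compl_ofPred, not_not]
    exact hC
  obtain ⟨C', hC'⟩ := hbdd.isCompact_closure.exists_bound_of_continuousOn hh.continuousOn
  refine ⟨max C C', fun x ↦ ?_⟩
  by_cases hx : ‖h x‖ ≤ C
  · exact hx.trans (le_max_left _ _)
  · exact (hC' x (subset_closure hx)).trans (le_max_right _ _)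

theorem Asymptotics.IsBigO.exists_eventually_posLog_norm_le {α E F : Type*} [SeminormedAddGroup E]
    [Norm F] {f : α → E} {g : α → F} {l : Filter α} (hfg : f =O[l] g) :
    ∃ C, ∀ᶠ x in l, log⁺ ‖f x‖ ≤ C + log⁺ ‖g x‖ := by
  obtain ⟨c, hc⟩ := hfg.bound
  refine ⟨log⁺ c, hc.mono fun x hx ↦ ?_⟩
  exact (posLog_le_posLog (norm_nonneg _) hx).trans posLog_mul

theorem Polynomial.exists_abs_posLog_norm_eval_sub_le {𝕜 : Type*} [NormedField 𝕜]
    [ProperSpace 𝕜] (P : 𝕜[X]) :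
    ∃ C, ∀ x, |log⁺ ‖P.eval x‖ - P.natDegree * log⁺ ‖x‖| ≤ C := by
  rcases eq_or_ne P 0 with rfl | hP
  · exact ⟨0, by simp⟩
  have hdeg : P.degree = (X ^ P.natDegree : 𝕜[X]).degree := by
    rw [degree_X_pow, degree_eq_natDegree hP]
  obtain ⟨C₁, hC₁⟩ := (isBigO_cobounded_of_degree_le hdeg.le).exists_eventually_posLog_norm_le
  obtain ⟨C₂, hC₂⟩ := (isBigO_cobounded_of_degree_le hdeg.ge).exists_eventually_posLog_norm_le
  have hcont : Continuous fun x ↦ log⁺ ‖P.eval x‖ - P.natDegree * log⁺ ‖x‖ := by fun_prop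
  simp only [← Real.norm_eq_abs]
  refine hcont.exists_forall_norm_le_of_eventually_cobounded (C := max C₁ C₂) ?_
  filter_upwards [hC₁, hC₂] with x h₁ h₂
  simp only [eval_pow, eval_X, norm_pow, posLog_pow] at h₁ h₂
  rw [Real.norm_eq_abs, abs_le]
  constructor <;> linarith [le_max_left C₁ C₂, le_max_right C₁ C₂]

section IterateDivPow

variable {X : Type*} {f : X → X} {h : X → ℝ} {d C : ℝ}

theorem dist_iterate_div_pow_succ_le (hd : 0 < d) (hfh : ∀ x, |h (f x) - d * h x| ≤ C)
    (n : ℕ) (x : X) :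
    dist (h (f^[n] x) / d ^ n) (h (f^[n + 1] x) / d ^ (n + 1)) ≤ C / d * d⁻¹ ^ n := by
  have hdiff : h (f^[n + 1] x) / d ^ (n + 1) - h (f^[n] x) / d ^ n
      = (h (f (f^[n] x)) - d * h (f^[n] x)) / d ^ (n + 1) := by
    rw [Function.iterate_succ_apply']
    field_simp
    ring
  rw [dist_comm, Real.dist_eq, hdiff, abs_div, abs_of_pos (pow_pos hd _)]
  calc |h (f (f^[n] x)) - d * h (f^[n] x)| / d ^ (n + 1) ≤ C / d ^ (n + 1) := by
        gcongr
        exact hfh _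
    _ = C / d * d⁻¹ ^ n := by
        rw [inv_pow, pow_succ']
        field_simp

theorem tendstoUniformly_iterate_div_pow (hd : 1 < d) (hfh : ∀ x, |h (f x) - d * h x| ≤ C)
    {G : X → ℝ} (hG : ∀ x, Tendsto (fun n ↦ h (f^[n] x) / d ^ n) atTop (𝓝 (G x))) :
    TendstoUniformly (fun n x ↦ h (f^[n] x) / d ^ n) G atTop :=
  tendstoUniformly_of_dist_le_geometric (inv_nonneg.2 (by linarith)) (inv_lt_one_of_one_lt₀ hd)
    (dist_iterate_div_pow_succ_le (by linarith) hfh) hG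

theorem continuous_of_tendsto_iterate_div_pow [TopologicalSpace X] (hf : Continuous f)
    (hh : Continuous h) (hd : 1 < d) (hfh : ∀ x, |h (f x) - d * h x| ≤ C) {G : X → ℝ}
    (hG : ∀ x, Tendsto (fun n ↦ h (f^[n] x) / d ^ n) atTop (𝓝 (G x))) :
    Continuous G :=
  (tendstoUniformly_iterate_div_pow hd hfh hG).continuous
    (Eventually.of_forall fun n ↦ (hh.comp (hf.iterate n)).div_const _).frequently

end IterateDivPow

theorem green_function_continuous_general (D : ℕ) (hD : 2 ≤ D) (P : Polynomial ℂ)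
    (hdeg : P.natDegree = D) (G : ℂ → ℝ)
    (hG : ∀ z : ℂ, Tendsto (fun n : ℕ =>
        (1 / (D : ℝ) ^ n) *
          max (Real.log ‖(fun w => P.eval w)^[n] z‖) 0)
      atTop (𝓝 (G z))) :
    Continuous G := by
  obtain ⟨C, hC⟩ := P.exists_abs_posLog_norm_eval_sub_le
  refine continuous_of_tendsto_iterate_div_pow (h := fun w ↦ log⁺ ‖w‖) P.continuous
    (by fun_prop) (by exact_mod_cast hD) (C := C) (fun z ↦ hdeg ▸ hC z) fun z ↦ ?_
  simpa [posLog_apply, max_comm, div_eq_inv_mul] using hG z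

/-- The Green's function of a monic polynomial of degree `D ≥ 2`
is continuous on `ℂ`. -/
theorem green_function_continuous (D : ℕ) (hD : 2 ≤ D) (P : Polynomial ℂ)
    (hmonic : P.Monic) (hdeg : P.natDegree = D) (G : ℂ → ℝ)
    (hG : ∀ z : ℂ, Tendsto (fun n : ℕ =>
        (1 / (D : ℝ) ^ n) *
          max (Real.log ‖(fun w => P.eval w)^[n] z‖) 0)
      atTop (𝓝 (G z))) :
    Continuous G :=
  green_function_continuous_general D hD P hdeg G hG
end

section
/- Let P : ℂ → ℂ be a monic polynomial of degree D ≥ 2, let K_P be its filled Julia set, and let G be its Green's function. Then for every z ∈ ℂ, G(z) = 0 if and only if z ∈ K_P. -/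
/-!
Outside a large disc a monic polynomial of degree `D ≥ 2` satisfies `|P w| ≥ |w|^D / 2`, hence
`|P w| / 2 ≥ (|w| / 2)^D`, and the complement of the disc is forward invariant. So once an orbit
reaches a point `w` with `|w| > 2` in that region, `log |Pⁿ w| ≥ Dⁿ log (|w| / 2)`, which keeps
`D⁻ⁿ log⁺ |Pⁿ z|` above a positive constant. Along a bounded orbit `log⁺ |Pⁿ z|` is bounded,
so the normalized values tend to `0`.
-/

open Filter Topology Polynomial Real Bornology Set Asymptotics

theorem Polynomial.Monic.exists_norm_pow_div_two_le_norm_eval {A : Type*} [NormedRing A]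
    [NormMulClass A] [NormOneClass A] {P : A[X]} (hP : P.Monic) :
    ∃ R, ∀ w : A, R ≤ ‖w‖ → ‖w‖ ^ P.natDegree / 2 ≤ ‖P.eval w‖ := by
  have hequiv : P.eval ~[cobounded A] (· ^ P.natDegree) := by
    simpa only [hP.leadingCoeff, one_mul] using isEquivalent_cobounded_leading_monomial (P := P)
  obtain ⟨R, -, hR⟩ := hasBasis_cobounded_norm.eventually_iff.mp
    (hequiv.isLittleO.bound one_half_pos)
  refine ⟨R, fun w hw => ?_⟩
  have hclose : ‖P.eval w - w ^ P.natDegree‖ ≤ 1 / 2 * ‖w ^ P.natDegree‖ := hR hw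
  have := norm_sub_norm_le (w ^ P.natDegree) (P.eval w)
  rw [norm_sub_rev, norm_pow] at this
  rw [norm_pow] at hclose
  linarith

noncomputable def greenApprox {E : Type*} [Norm E] (f : E → E) (d : ℝ) (z : E) (n : ℕ) : ℝ :=
  1 / d ^ n * max (log ‖f^[n] z‖) 0

theorem tendsto_greenApprox_zero_of_isBounded {E : Type*} [SeminormedAddGroup E] {f : E → E}
    {d : ℝ} (hd : 1 < d) {z : E} (hz : IsBounded (range fun n => f^[n] z)) :
    Tendsto (greenApprox f d z) atTop (𝓝 0) := by
  obtain ⟨M, hM⟩ := isBounded_iff_forall_norm_le.mp hz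
  have hlog : ∀ n, max (log ‖f^[n] z‖) 0 ≤ log⁺ M := fun n => by
    simpa only [posLog, max_comm] using posLog_le_posLog (norm_nonneg _) (hM _ (mem_range_self n))
  have hgeom : Tendsto (fun n : ℕ => (1 / d) ^ n * log⁺ M) atTop (𝓝 0) := by
    simpa only [zero_mul] using (tendsto_pow_atTop_nhds_zero_of_lt_one (by positivity)
      ((div_lt_one (by linarith)).mpr hd)).mul_const (log⁺ M)
  refine squeeze_zero (fun n => by unfold greenApprox; positivity) (fun n => ?_) hgeom
  rw [greenApprox, div_pow, one_pow]
  exact mul_le_mul_of_nonneg_left (hlog n) (by positivity)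

section Escape

variable {E : Type*} [SeminormedAddCommGroup E] {f : E → E} {D : ℕ} {R : ℝ}

theorem mapsTo_setOf_le_norm (hD : 2 ≤ D) (hR : 2 ≤ R)
    (hf : ∀ w, R ≤ ‖w‖ → ‖w‖ ^ D / 2 ≤ ‖f w‖) :
    MapsTo f {w | R ≤ ‖w‖} {w | R ≤ ‖w‖} := fun w (hw : R ≤ ‖w‖) => by
  have : ‖w‖ ^ 2 ≤ ‖w‖ ^ D := pow_le_pow_right₀ (by linarith) hD
  show R ≤ ‖f w‖
  nlinarith [hf w hw]

theorem pow_pow_le_norm_iterate (hD : 2 ≤ D) (hR : 2 ≤ R)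
    (hf : ∀ w, R ≤ ‖w‖ → ‖w‖ ^ D / 2 ≤ ‖f w‖) {w : E} (hw : R ≤ ‖w‖) (n : ℕ) :
    (‖w‖ / 2) ^ D ^ n ≤ ‖f^[n] w‖ / 2 := by
  induction n with
  | zero => simp
  | succ n ih =>
    set u := f^[n] w
    have hu : R ≤ ‖u‖ := (mapsTo_setOf_le_norm hD hR hf).iterate n hw
    have h4 : (4 : ℝ) ≤ 2 ^ D := by
      calc (4 : ℝ) = 2 ^ 2 := by norm_num
        _ ≤ 2 ^ D := pow_le_pow_right₀ (by norm_num) hD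
    calc (‖w‖ / 2) ^ D ^ (n + 1) = ((‖w‖ / 2) ^ D ^ n) ^ D := by rw [pow_succ, pow_mul]
      _ ≤ (‖u‖ / 2) ^ D := pow_le_pow_left₀ (by positivity) ih D
      _ = ‖u‖ ^ D / 2 ^ D := div_pow _ _ _
      _ ≤ ‖u‖ ^ D / 4 := div_le_div_of_nonneg_left (by positivity) (by norm_num) h4
      _ ≤ ‖f^[n + 1] w‖ / 2 := by
        rw [Function.iterate_succ_apply']
        linarith [hf u hu]

theorem exists_pos_le_greenApprox_of_not_isBounded (hD : 2 ≤ D) (hR : 2 ≤ R)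
    (hf : ∀ w, R ≤ ‖w‖ → ‖w‖ ^ D / 2 ≤ ‖f w‖) {z : E}
    (hz : ¬IsBounded (range fun n => f^[n] z)) :
    ∃ c > 0, ∀ᶠ n in atTop, c ≤ greenApprox f D z n := by
  obtain ⟨N, hN⟩ : ∃ N, R < ‖f^[N] z‖ := by
    by_contra! h
    exact hz (isBounded_iff_forall_norm_le.mpr ⟨R, forall_mem_range.mpr h⟩)
  set w := f^[N] z
  have hw2 : 1 < ‖w‖ / 2 := by linarith
  refine ⟨log (‖w‖ / 2) / (D : ℝ) ^ N, by have := log_pos hw2; positivity,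
    eventually_atTop.mpr ⟨N, fun n hn => ?_⟩⟩
  obtain ⟨m, rfl⟩ := Nat.exists_eq_add_of_le' hn
  have hlog : (D : ℝ) ^ m * log (‖w‖ / 2) ≤ log ‖f^[m] w‖ := by
    calc (D : ℝ) ^ m * log (‖w‖ / 2) = log ((‖w‖ / 2) ^ D ^ m) := by
          rw [log_pow]; push_cast; rfl
      _ ≤ log (‖f^[m] w‖ / 2) :=
          log_le_log (by positivity) (pow_pow_le_norm_iterate hD hR hf hN.le m)
      _ ≤ log ‖f^[m] w‖ := by
          have hm : R ≤ ‖f^[m] w‖ := (mapsTo_setOf_le_norm hD hR hf).iterate m hN.le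
          exact log_le_log (by linarith) (by linarith)
  calc log (‖w‖ / 2) / (D : ℝ) ^ N
      = 1 / (D : ℝ) ^ (m + N) * ((D : ℝ) ^ m * log (‖w‖ / 2)) := by
        rw [pow_add]; field_simp
    _ ≤ greenApprox f D z (m + N) := by
        rw [greenApprox, Function.iterate_add_apply]
        exact mul_le_mul_of_nonneg_left (hlog.trans (le_max_left _ _)) (by positivity)

end Escape

/-- `G(z) = 0` if and only if `z` belongs to the filled Julia set
(the set of points with bounded forward orbit). -/
theorem green_function_zero_iff_filled_julia (D : ℕ) (hD : 2 ≤ D) (P : Polynomial ℂ)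
    (hmonic : P.Monic) (hdeg : P.natDegree = D) (G : ℂ → ℝ)
    (hG : ∀ z : ℂ, Tendsto (fun n : ℕ =>
        (1 / (D : ℝ) ^ n) *
          max (Real.log ‖(fun w => P.eval w)^[n] z‖) 0)
      atTop (𝓝 (G z))) :
    ∀ z : ℂ, G z = 0 ↔
      Bornology.IsBounded (Set.range fun n : ℕ => (fun w => P.eval w)^[n] z) := by
  intro z
  obtain ⟨R, hR⟩ := hmonic.exists_norm_pow_div_two_le_norm_eval
  rw [hdeg] at hR
  have hesc : ∀ w : ℂ, max R 2 ≤ ‖w‖ → ‖w‖ ^ D / 2 ≤ ‖P.eval w‖ :=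
    fun w hw => hR w ((le_max_left _ _).trans hw)
  constructor
  · intro hGz
    by_contra hunb
    obtain ⟨c, hc, hle⟩ :=
      exists_pos_le_greenApprox_of_not_isBounded hD (le_max_right _ _) hesc hunb
    linarith [ge_of_tendsto (hG z) hle]
  · intro hz
    exact tendsto_nhds_unique (hG z)
      (tendsto_greenApprox_zero_of_isBounded (by norm_cast) hz)
end

section
/- Let P : ℂ → ℂ be a monic polynomial of degree D ≥ 2. Then the complement ℂ ∖ K_P of its filled Julia set is a connected subset of ℂ. -/
/-!
Outside a large disc `‖z‖ > R` a polynomial of degree at least two increases the norm by at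
least one, so that exterior region lies in the complement of `K_P` and `K_P` is the closed set
of points whose iterates all stay in the disc `‖z‖ ≤ R`. A bounded connected component `U` of
`ℂ \ K_P` would have its frontier in `K_P`; by the maximum modulus principle every iterate would
then map `U` into the disc, forcing `U ⊆ K_P`. Hence every component of `ℂ \ K_P` is unbounded,
meets the connected exterior region, and `ℂ \ K_P` is connected.
-/

open Filter Topology Bornology Metric Set Polynomial

section Topology

variable {α : Type*} [TopologicalSpace α]

theorem IsOpen.frontier_connectedComponentIn_subset_compl [LocallyConnectedSpace α]
    {S : Set α} (hS : IsOpen S) (x : α) : frontier (connectedComponentIn S x) ⊆ Sᶜ := by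
  intro w hw hwS
  have hopen : IsOpen (connectedComponentIn S x) := hS.connectedComponentIn
  obtain ⟨t, htw, htx⟩ :=
    mem_closure_iff.mp hw.1 _ hS.connectedComponentIn (mem_connectedComponentIn hwS)
  have hwx : w ∈ connectedComponentIn S x := by
    rw [connectedComponentIn_eq htx, ← connectedComponentIn_eq htw]
    exact mem_connectedComponentIn hwS
  exact (hopen.frontier_eq ▸ hw).2 hwx

theorem isConnected_of_connectedComponentIn_meets {S E : Set α} (hE : IsConnected E)
    (hES : E ⊆ S) (h : ∀ y ∈ S, (connectedComponentIn S y ∩ E).Nonempty) : IsConnected S := by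
  obtain ⟨x, hx⟩ := hE.nonempty
  refine ⟨⟨x, hES hx⟩, isPreconnected_of_forall x fun y hy => ?_⟩
  obtain ⟨w, hwy, hwE⟩ := h y hy
  exact ⟨connectedComponentIn S y ∪ E, union_subset (connectedComponentIn_subset S y) hES,
    Or.inr hx, Or.inl (mem_connectedComponentIn hy),
    isPreconnected_connectedComponentIn.union w hwy hwE hE.isPreconnected⟩

end Topology

theorem Complex.isConnected_setOf_lt_norm {R : ℝ} (hR : 0 < R) :
    IsConnected {z : ℂ | R < ‖z‖} := by
  have himage : exp '' {w : ℂ | Real.log R < w.re} = {z : ℂ | R < ‖z‖} := by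
    ext z
    constructor
    · rintro ⟨w, hw, rfl⟩
      show R < ‖exp w‖
      rw [norm_exp, ← Real.exp_log hR]
      exact Real.exp_lt_exp.mpr hw
    · intro hz
      have hz0 : z ≠ 0 := norm_pos_iff.mp (hR.trans hz)
      refine ⟨log z, ?_, exp_log hz0⟩
      show Real.log R < (log z).re
      rw [log_re]
      exact Real.log_lt_log hR hz
  rw [← himage]
  exact ((convex_halfSpace_re_gt _).isConnected ⟨Real.log R + 1, by simp⟩).image _
    continuous_exp.continuousOn

theorem Polynomial.exists_forall_norm_add_one_le_norm_eval {𝕜 : Type*} [NormedField 𝕜]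
    (P : 𝕜[X]) (hP : 2 ≤ P.natDegree) :
    ∃ R > 0, ∀ z : 𝕜, R < ‖z‖ → ‖z‖ + 1 ≤ ‖P.eval z‖ := by
  set c := P.coeff 0
  have hdivX : 0 < P.divX.degree :=
    natDegree_pos_iff_degree_pos.mp (by rw [natDegree_divX_eq_natDegree_tsub_one]; omega)
  have hev : ∀ᶠ z in comap norm atTop, 2 ≤ ‖P.divX.eval z‖ ∧ ‖c‖ + 1 ≤ ‖z‖ :=
    ((P.divX.tendsto_norm_atTop hdivX tendsto_comap).eventually_ge_atTop 2).and
      (tendsto_comap.eventually_ge_atTop _)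
  obtain ⟨R, -, hR⟩ := (atTop_basis_Ioi.comap norm).eventually_iff.mp hev
  refine ⟨max R 1, by positivity, fun z hz => ?_⟩
  obtain ⟨hQ, hc⟩ := hR (lt_of_le_of_lt (le_max_left _ _) hz)
  have hPz : P.eval z = P.divX.eval z * z + c := by
    conv_lhs => rw [← divX_mul_X_add P]
    simp [c]
  calc ‖z‖ + 1 ≤ 2 * ‖z‖ - ‖c‖ := by linarith
    _ ≤ ‖P.divX.eval z‖ * ‖z‖ - ‖c‖ := by gcongr
    _ ≤ ‖P.eval z‖ := by
      rw [hPz, ← norm_mul]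
      linarith [norm_le_add_norm_add (P.divX.eval z * z) c]

def filledJuliaSet {α : Type*} [Bornology α] (f : α → α) : Set α :=
  {z | IsBounded (range fun n : ℕ => f^[n] z)}

theorem mem_filledJuliaSet {α : Type*} [Bornology α] {f : α → α} {z : α} :
    z ∈ filledJuliaSet f ↔ IsBounded (range fun n : ℕ => f^[n] z) :=
  Iff.rfl

section Escape

variable {E : Type*} [SeminormedAddCommGroup E] {f : E → E} {R : ℝ}

theorem norm_add_le_norm_iterate (hf : ∀ z, R < ‖z‖ → ‖z‖ + 1 ≤ ‖f z‖) {z : E}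
    (hz : R < ‖z‖) (n : ℕ) : ‖z‖ + n ≤ ‖f^[n] z‖ := by
  induction n with
  | zero => simp
  | succ n ih =>
    have hRn : R < ‖f^[n] z‖ := by linarith [n.cast_nonneg (α := ℝ)]
    rw [Function.iterate_succ_apply']
    push_cast
    linarith [hf _ hRn]

theorem notMem_filledJuliaSet (hf : ∀ z, R < ‖z‖ → ‖z‖ + 1 ≤ ‖f z‖) {z : E}
    (hz : R < ‖z‖) : z ∉ filledJuliaSet f := by
  intro hK
  obtain ⟨C, hC⟩ := isBounded_iff_forall_norm_le.mp hK
  obtain ⟨n, hn⟩ := exists_nat_gt (C - ‖z‖)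
  linarith [hC _ (mem_range_self n), norm_add_le_norm_iterate hf hz n]

theorem norm_iterate_le_of_mem_filledJuliaSet (hf : ∀ z, R < ‖z‖ → ‖z‖ + 1 ≤ ‖f z‖)
    {z : E} (hz : z ∈ filledJuliaSet f) (n : ℕ) : ‖f^[n] z‖ ≤ R := by
  refine not_lt.mp fun hn => notMem_filledJuliaSet hf hn (hz.subset ?_)
  rintro _ ⟨m, rfl⟩
  exact ⟨m + n, Function.iterate_add_apply f m n z⟩

theorem filledJuliaSet_eq_iInter (hf : ∀ z, R < ‖z‖ → ‖z‖ + 1 ≤ ‖f z‖) :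
    filledJuliaSet f = ⋂ n : ℕ, f^[n] ⁻¹' closedBall 0 R := by
  ext z
  simp only [mem_iInter, mem_preimage, mem_closedBall_zero_iff]
  refine ⟨norm_iterate_le_of_mem_filledJuliaSet hf, fun h => ?_⟩
  refine mem_filledJuliaSet.mpr <| (isBounded_closedBall (x := 0) (r := R)).subset ?_
  exact range_subset_iff.mpr fun n => mem_closedBall_zero_iff.mpr (h n)

theorem isClosed_filledJuliaSet (hc : Continuous f) (hf : ∀ z, R < ‖z‖ → ‖z‖ + 1 ≤ ‖f z‖) :
    IsClosed (filledJuliaSet f) := by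
  rw [filledJuliaSet_eq_iInter hf]
  exact isClosed_iInter fun n => isClosed_closedBall.preimage (hc.iterate n)

end Escape

section Complex

variable {f : ℂ → ℂ} {R : ℝ}

theorem not_isBounded_connectedComponentIn_compl_filledJuliaSet (hd : Differentiable ℂ f)
    (hf : ∀ z, R < ‖z‖ → ‖z‖ + 1 ≤ ‖f z‖) {z : ℂ} (hz : z ∉ filledJuliaSet f) :
    ¬IsBounded (connectedComponentIn (filledJuliaSet f)ᶜ z) := by
  intro hC
  have hfrontier : frontier (connectedComponentIn (filledJuliaSet f)ᶜ z) ⊆ filledJuliaSet f := by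
    simpa using ((isClosed_filledJuliaSet hd.continuous hf).isOpen_compl
      |>.frontier_connectedComponentIn_subset_compl z)
  refine hz ?_
  rw [filledJuliaSet_eq_iInter hf]
  refine mem_iInter.mpr fun n => mem_closedBall_zero_iff.mpr ?_
  exact Complex.norm_le_of_forall_mem_frontier_norm_le hC (hd.iterate n).diffContOnCl
    (fun w hw => norm_iterate_le_of_mem_filledJuliaSet hf (hfrontier hw) n)
    (subset_closure (mem_connectedComponentIn hz))

theorem isConnected_compl_filledJuliaSet (hd : Differentiable ℂ f) (hR : 0 < R)
    (hf : ∀ z, R < ‖z‖ → ‖z‖ + 1 ≤ ‖f z‖) : IsConnected (filledJuliaSet f)ᶜ := by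
  refine isConnected_of_connectedComponentIn_meets (Complex.isConnected_setOf_lt_norm hR)
    (fun _ => notMem_filledJuliaSet hf) fun z hz => ?_
  have hunbdd := not_isBounded_connectedComponentIn_compl_filledJuliaSet hd hf hz
  simp only [isBounded_iff_forall_norm_le, not_exists, not_forall, not_le] at hunbdd
  obtain ⟨w, hw, hRw⟩ := hunbdd R
  exact ⟨w, hw, hRw⟩

end Complex

theorem complement_filled_julia_connected_general (D : ℕ) (hD : 2 ≤ D) (P : Polynomial ℂ)
    (hdeg : P.natDegree = D) :
    IsConnected {z : ℂ |
        Bornology.IsBounded (Set.range fun n : ℕ => (fun w => P.eval w)^[n] z)}ᶜ := by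
  obtain ⟨R, hR, hf⟩ := P.exists_forall_norm_add_one_le_norm_eval (hdeg ▸ hD)
  exact isConnected_compl_filledJuliaSet P.differentiable hR hf

/-- The complement of the filled Julia set is connected. -/
theorem complement_filled_julia_connected (D : ℕ) (hD : 2 ≤ D) (P : Polynomial ℂ)
    (hmonic : P.Monic) (hdeg : P.natDegree = D) :
    IsConnected {z : ℂ |
        Bornology.IsBounded (Set.range fun n : ℕ => (fun w => P.eval w)^[n] z)}ᶜ :=
  complement_filled_julia_connected_general D hD P hdeg
end

section
/- Let P : ℂ → ℂ be a monic polynomial of degree D ≥ 2, with filled Julia set K_P and Green's function G. Then G is harmonic on the open set ℂ ∖ K_P (i.e., G is smooth there with vanishing Laplacian). -/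
open Filter Topology Polynomial

noncomputable def Complex.abs : AbsoluteValue ℂ ℝ :=
  IsAbsoluteValue.toAbsoluteValue (norm : ℂ → ℝ)

lemma Complex.abs_apply' (z : ℂ) : Complex.abs z = ‖z‖ := rfl

lemma Complex.abs_ofReal (r : ℝ) : Complex.abs (r : ℂ) = |r| := by
  rw [Complex.abs_apply', Complex.norm_real, Real.norm_eq_abs]

lemma Complex.abs_I : Complex.abs Complex.I = 1 := by
  rw [Complex.abs_apply', Complex.norm_I]

lemma Complex.norm_eq_abs (z : ℂ) : ‖z‖ = Complex.abs z := rfl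

lemma Complex.continuous_abs : Continuous (fun z : ℂ => Complex.abs z) := continuous_norm

lemma poly_tail_bound (D : ℕ) (hD : 2 ≤ D) (P : Polynomial ℂ)
    (hmonic : P.Monic) (hdeg : P.natDegree = D) :
    ∃ C : ℝ, 0 ≤ C ∧ ∀ ζ : ℂ, 1 ≤ Complex.abs ζ →
      Complex.abs (P.eval ζ - ζ ^ D) ≤ C * Complex.abs ζ ^ (D - 1) := by
  set Q : Polynomial ℂ := P - X ^ D with hQ
  refine ⟨∑ i ∈ Finset.range D, Complex.abs (Q.coeff i), Finset.sum_nonneg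
    (fun i _ => (Complex.abs.nonneg _)), fun ζ hζ => ?_⟩
  have hQd : Q.natDegree < D + 1 := by
    have : Q.natDegree ≤ D := le_trans (natDegree_sub_le _ _) (by simp [hdeg])
    omega
  have hQD : Q.coeff D = 0 := by
    have h1 : P.coeff D = 1 := by
      have := hmonic.leadingCoeff
      rwa [Polynomial.leadingCoeff, hdeg] at this
    simp [hQ, h1, coeff_X_pow]
  have heval : P.eval ζ - ζ ^ D = Q.eval ζ := by simp [hQ]
  rw [heval, eval_eq_sum_range' hQd]
  rw [Finset.sum_range_succ, hQD]
  simp only [zero_mul, add_zero]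
  calc Complex.abs (∑ i ∈ Finset.range D, Q.coeff i * ζ ^ i)
      ≤ ∑ i ∈ Finset.range D, Complex.abs (Q.coeff i * ζ ^ i) :=
        Complex.abs.sum_le _ _
    _ ≤ ∑ i ∈ Finset.range D, Complex.abs (Q.coeff i) * Complex.abs ζ ^ (D - 1) := by
        apply Finset.sum_le_sum
        intro i hi
        rw [map_mul, map_pow]
        apply mul_le_mul_of_nonneg_left _ (Complex.abs.nonneg _)
        have : i ≤ D - 1 := by
          have := Finset.mem_range.mp hi; omega
        exact pow_le_pow_right₀ hζ this
    _ = (∑ i ∈ Finset.range D, Complex.abs (Q.coeff i)) * Complex.abs ζ ^ (D - 1) := by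
        rw [Finset.sum_mul]

/-- There is `R ≥ 4` such that beyond `R`, `P.eval ζ / ζ^D` is within `1/2` of `1`,
`|P.eval ζ| ≥ |ζ|^D/2 ≥ 2|ζ|`. -/
lemma poly_radius (D : ℕ) (hD : 2 ≤ D) (P : Polynomial ℂ)
    (hmonic : P.Monic) (hdeg : P.natDegree = D) :
    ∃ R : ℝ, 4 ≤ R ∧ ∀ ζ : ℂ, R ≤ Complex.abs ζ →
      Complex.abs (P.eval ζ / ζ ^ D - 1) ≤ 1 / 2 ∧
      Complex.abs ζ ^ D / 2 ≤ Complex.abs (P.eval ζ) ∧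
      2 * Complex.abs ζ ≤ Complex.abs ζ ^ D / 2 := by
  obtain ⟨C, hC0, hC⟩ := poly_tail_bound D hD P hmonic hdeg
  refine ⟨max 4 (2 * C + 2), le_max_left _ _, fun ζ hζ => ?_⟩
  have h4 : (4 : ℝ) ≤ Complex.abs ζ := le_trans (le_max_left _ _) hζ
  have h1 : (1 : ℝ) ≤ Complex.abs ζ := by linarith
  have h2C : 2 * C + 2 ≤ Complex.abs ζ := le_trans (le_max_right _ _) hζ
  have hζ0 : ζ ≠ 0 := by
    intro h; rw [h] at h1; simp at h1; linarith
  have hζD0 : ζ ^ D ≠ 0 := pow_ne_zero _ hζ0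
  have habsD : Complex.abs (ζ ^ D) = Complex.abs ζ ^ D := map_pow _ _ _
  have hpos : (0:ℝ) < Complex.abs ζ := by linarith
  have hposD : (0:ℝ) < Complex.abs ζ ^ D := pow_pos hpos _
  have key : Complex.abs (P.eval ζ / ζ ^ D - 1) ≤ 1 / 2 := by
    have : P.eval ζ / ζ ^ D - 1 = (P.eval ζ - ζ ^ D) / ζ ^ D := by
      field_simp
    rw [this, map_div₀, habsD]
    rw [div_le_iff₀ hposD]
    calc Complex.abs (P.eval ζ - ζ ^ D) ≤ C * Complex.abs ζ ^ (D - 1) := hC ζ h1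
      _ ≤ 1 / 2 * Complex.abs ζ ^ D := by
          have hpow : Complex.abs ζ ^ D = Complex.abs ζ ^ (D - 1) * Complex.abs ζ := by
            rw [← pow_succ]; congr 1; omega
          rw [hpow, ← mul_assoc]
          have hp : (0:ℝ) ≤ Complex.abs ζ ^ (D-1) := pow_nonneg (by positivity) _
          nlinarith
  refine ⟨key, ?_, ?_⟩
  · -- |eval| ≥ |ζ|^D/2
    have h3 : Complex.abs (P.eval ζ / ζ ^ D) ≥ 1 / 2 := by
      have h1abs : Complex.abs (1 : ℂ) = 1 := by simp
      have htri := Complex.abs.le_sub (1 : ℂ) (P.eval ζ / ζ ^ D)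
      have hcomm : Complex.abs ((1:ℂ) - P.eval ζ / ζ ^ D)
          = Complex.abs (P.eval ζ / ζ ^ D - 1) := Complex.abs.map_sub 1 _
      rw [hcomm, h1abs] at htri
      linarith
    rw [map_div₀, habsD, ge_iff_le, le_div_iff₀ hposD] at h3
    linarith
  · -- 2|ζ| ≤ |ζ|^D/2
    have hpow : Complex.abs ζ ^ D = Complex.abs ζ ^ (D - 1) * Complex.abs ζ := by
      rw [← pow_succ]; congr 1; omega
    have hge : Complex.abs ζ ≤ Complex.abs ζ ^ (D - 1) := by
      calc Complex.abs ζ = Complex.abs ζ ^ 1 := (pow_one _).symm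
        _ ≤ Complex.abs ζ ^ (D - 1) := pow_le_pow_right₀ h1 (by omega)
    nlinarith


lemma mem_slit_of_close {u : ℂ} (hu : Complex.abs (u - 1) ≤ 1/2) : u ∈ Complex.slitPlane := by
  have h1 : |(u - 1).re| ≤ 1/2 := le_trans (Complex.abs_re_le_norm _) hu
  have h2 : (u - 1).re = u.re - 1 := by simp
  rw [h2, abs_le] at h1
  exact Complex.mem_slitPlane_iff.mpr (Or.inl (by linarith [h1.1]))

lemma abs_log_le_five {u : ℂ} (hu : Complex.abs (u - 1) ≤ 1/2) :
    Complex.abs (Complex.log u) ≤ 5 := by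
  have habs_lb : 1/2 ≤ Complex.abs u := by
    have htri := Complex.abs.le_sub (1 : ℂ) u
    have hcomm : Complex.abs ((1:ℂ) - u) = Complex.abs (u - 1) := Complex.abs.map_sub 1 u
    simp only [map_one] at htri
    rw [hcomm] at htri
    linarith
  have habs_ub : Complex.abs u ≤ 3/2 := by
    have htri := Complex.abs.le_sub u (1 : ℂ)
    simp only [map_one] at htri
    linarith
  have hlog : |Real.log (Complex.abs u)| ≤ 1 := by
    rw [abs_le]
    constructor
    · have h2 : Real.log (1/2) ≤ Real.log (Complex.abs u) :=
        Real.log_le_log (by norm_num) habs_lb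
      have : Real.log (1/2) = -Real.log 2 := by
        rw [one_div, Real.log_inv]
      have hl2 : Real.log 2 ≤ 1 := by
        have := Real.log_le_sub_one_of_pos (x := 2) (by norm_num)
        linarith
      linarith
    · have := Real.log_le_sub_one_of_pos (x := Complex.abs u) (by linarith)
      linarith
  have harg : |Complex.arg u| ≤ 4 := le_trans (Complex.abs_arg_le_pi u) (by
    linarith [Real.pi_le_four])
  calc Complex.abs (Complex.log u)
      ≤ Complex.abs ((Real.log (Complex.abs u) : ℂ)) + Complex.abs ((Complex.arg u : ℂ) * Complex.I) := by
        rw [Complex.log]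
        exact Complex.abs.add_le _ _
    _ ≤ 5 := by
        rw [map_mul, Complex.abs_I, mul_one, Complex.abs_ofReal, Complex.abs_ofReal]
        linarith


lemma re_fderiv_holo {F : ℂ → ℂ} {U : Set ℂ} (hU : IsOpen U) (hF : DifferentiableOn ℂ F U)
    {z : ℂ} (hz : z ∈ U) (v : ℂ) :
    fderiv ℝ (fun w => (F w).re) z v = (deriv F z * v).re := by
  have hFz : DifferentiableAt ℂ F z := hF.differentiableAt (hU.mem_nhds hz)
  have h1 : HasFDerivAt F (ContinuousLinearMap.smulRight (1 : ℂ →L[ℂ] ℂ) (deriv F z)) z :=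
    hFz.hasDerivAt.hasFDerivAt
  have h2 : HasFDerivAt (fun w => (F w).re)
      (Complex.reCLM.comp ((ContinuousLinearMap.smulRight (1 : ℂ →L[ℂ] ℂ)
        (deriv F z)).restrictScalars ℝ)) z :=
    (Complex.reCLM.hasFDerivAt).comp z (h1.restrictScalars ℝ)
  rw [h2.fderiv]
  simp [mul_comm]

lemma re_analyticAt {F : ℂ → ℂ} {U : Set ℂ} (hU : IsOpen U) (hF : DifferentiableOn ℂ F U)
    {z : ℂ} (hz : z ∈ U) : AnalyticAt ℝ (fun w => (F w).re) z := by
  have h1 : AnalyticAt ℂ F z := (hF.analyticOnNhd hU) z hz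
  exact (Complex.reCLM.analyticAt (F z)).comp (h1.restrictScalars)

lemma re_contDiffAt {F : ℂ → ℂ} {U : Set ℂ} (hU : IsOpen U) (hF : DifferentiableOn ℂ F U)
    {z : ℂ} (hz : z ∈ U) : ContDiffAt ℝ (⊤ : ℕ∞) (fun w => (F w).re) z :=
  (re_analyticAt hU hF hz).contDiffAt

lemma harmonic_of_holo {F : ℂ → ℂ} {U : Set ℂ} (hU : IsOpen U) (hF : DifferentiableOn ℂ F U)
    {z : ℂ} (hz : z ∈ U) :
    fderiv ℝ (fun w => fderiv ℝ (fun w => (F w).re) w 1) z 1 +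
      fderiv ℝ (fun w => fderiv ℝ (fun w => (F w).re) w Complex.I) z Complex.I = 0 := by
  have hF' : DifferentiableOn ℂ (deriv F) U :=
    ((hF.analyticOnNhd hU).deriv).differentiableOn
  have key : ∀ v : ℂ, fderiv ℝ (fun w => fderiv ℝ (fun w => (F w).re) w v) z v
      = (deriv (deriv F) z * v * v).re := by
    intro v
    have he : (fun w => fderiv ℝ (fun w => (F w).re) w v)
        =ᶠ[𝓝 z] (fun w => (deriv F w * v).re) :=
      Filter.eventually_of_mem (hU.mem_nhds hz) (fun w hw => re_fderiv_holo hU hF hw v)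
    rw [he.fderiv_eq]
    have hmul : DifferentiableOn ℂ (fun w => deriv F w * v) U := hF'.mul_const v
    have h3 : fderiv ℝ (fun w => ((fun w => deriv F w * v) w).re) z v
        = (deriv (fun w => deriv F w * v) z * v).re := re_fderiv_holo hU hmul hz v
    rw [h3, deriv_mul_const (hF'.differentiableAt (hU.mem_nhds hz))]
  rw [key 1, key Complex.I]
  simp [mul_assoc, Complex.I_mul_I]

lemma local_rep (D : ℕ) (hD : 2 ≤ D) (P : Polynomial ℂ)
    (hmonic : P.Monic) (hdeg : P.natDegree = D) (G : ℂ → ℝ)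
    (hG : ∀ z : ℂ, Tendsto (fun n : ℕ =>
        (1 / (D : ℝ) ^ n) *
          max (Real.log (Complex.abs ((fun w => P.eval w)^[n] z))) 0)
      atTop (𝓝 (G z))) (z₀ : ℂ)
    (hz₀ : ¬ Bornology.IsBounded (Set.range fun n : ℕ => (fun w => P.eval w)^[n] z₀)) :
    ∃ (U : Set ℂ) (F : ℂ → ℂ), IsOpen U ∧ z₀ ∈ U ∧ DifferentiableOn ℂ F U ∧
      ∀ w ∈ U, G w = (F w).re := by
  obtain ⟨R, hR4, hR⟩ := poly_radius D hD P hmonic hdeg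
  set f : ℂ → ℂ := fun w => P.eval w with hf
  -- basic facts about R
  have hR1 : (1:ℝ) ≤ R := by linarith
  have hRstep : ∀ ζ : ℂ, R ≤ Complex.abs ζ → R ≤ Complex.abs (f ζ) := by
    intro ζ hζ
    obtain ⟨h1, h2, h3⟩ := hR ζ hζ
    have : 2 * Complex.abs ζ ≤ Complex.abs (f ζ) := le_trans h3 h2
    linarith
  -- escape time
  have hescape : ∃ n, R + 1 ≤ Complex.abs (f^[n] z₀) := by
    by_contra h
    push_neg at h
    apply hz₀
    apply Bornology.IsBounded.subset (Metric.isBounded_closedBall (x := (0:ℂ)) (r := R + 1))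
    rintro x ⟨n, rfl⟩
    rw [Metric.mem_closedBall, dist_zero_right, Complex.norm_eq_abs]
    exact le_of_lt (h n)
  obtain ⟨n₀, hn₀⟩ := hescape
  have hdiff : ∀ m : ℕ, Differentiable ℂ (f^[m]) :=
    fun m => (Polynomial.differentiable P).iterate m
  have hcont : Continuous (f^[n₀]) := (hdiff n₀).continuous
  -- the rotation constant
  set a : ℂ := f^[n₀] z₀ / ((Complex.abs (f^[n₀] z₀) : ℝ) : ℂ) with ha
  have habsz₀ : (0:ℝ) < Complex.abs (f^[n₀] z₀) := by linarith
  have hz₀ne : f^[n₀] z₀ ≠ 0 := by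
    intro h; rw [h] at habsz₀; simp at habsz₀
  have haabs : Complex.abs a = 1 := by
    rw [ha, map_div₀, Complex.abs_ofReal, abs_of_pos habsz₀, div_self (ne_of_gt habsz₀)]
  have hane : a ≠ 0 := by
    intro h; rw [h] at haabs; simp at haabs
  -- the open set
  set U : Set ℂ := (f^[n₀]) ⁻¹' {ζ | R < Complex.abs ζ} ∩
      (fun w => f^[n₀] w / a) ⁻¹' Complex.slitPlane with hU
  have hUopen : IsOpen U :=
    ((isOpen_lt continuous_const Complex.continuous_abs).preimage hcont).inter
      (Complex.isOpen_slitPlane.preimage (hcont.div_const a))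
  have hz₀U : z₀ ∈ U := by
    constructor
    · show R < Complex.abs (f^[n₀] z₀); linarith
    · show f^[n₀] z₀ / a ∈ Complex.slitPlane
      have : f^[n₀] z₀ / a = ((Complex.abs (f^[n₀] z₀) : ℝ) : ℂ) := by
        rw [ha]
        field_simp
      rw [this]
      exact Complex.ofReal_mem_slitPlane.mpr habsz₀
  -- all later iterates stay beyond R on U
  have hiter : ∀ w ∈ U, ∀ k : ℕ, R ≤ Complex.abs (f^[n₀ + k] w) := by
    intro w hw k
    induction k with
    | zero => exact le_of_lt hw.1
    | succ k ih =>
        have h : f^[n₀ + (k+1)] w = f (f^[n₀ + k] w) :=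
          Function.iterate_succ_apply' f (n₀ + k) w
        rw [h]
        exact hRstep _ ih
  have hDpos : (0:ℝ) < (D:ℝ) := by positivity
  have hD2 : (2:ℝ) ≤ (D:ℝ) := by exact_mod_cast hD
  -- the series terms
  set t : ℕ → ℂ → ℂ := fun n w =>
    (((1:ℝ)/(D:ℝ)^(n₀+n+1) : ℝ) : ℂ) *
      Complex.log (f^[n₀+n+1] w / (f^[n₀+n] w)^D) with ht
  set c₀ : ℂ → ℂ := fun w =>
    (((1:ℝ)/(D:ℝ)^n₀ : ℝ) : ℂ) * Complex.log (f^[n₀] w / a) with hc₀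
  -- the key quotient is close to 1 on U
  have hclose : ∀ w ∈ U, ∀ n : ℕ,
      Complex.abs (f^[n₀+n+1] w / (f^[n₀+n] w)^D - 1) ≤ 1/2 := by
    intro w hw n
    have h1 : R ≤ Complex.abs (f^[n₀+n] w) := hiter w hw n
    have h2 : f^[n₀+n+1] w = f (f^[n₀+n] w) := by
      rw [← Function.iterate_succ_apply' f (n₀+n) w]
    rw [h2]
    exact (hR _ h1).1
  have hne : ∀ w ∈ U, ∀ n : ℕ, f^[n₀+n] w ≠ 0 := by
    intro w hw n
    have h1 : R ≤ Complex.abs (f^[n₀+n] w) := hiter w hw n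
    intro h
    rw [h] at h1; simp at h1; linarith
  -- norm bound for t
  have htbound : ∀ n : ℕ, ∀ w ∈ U, ‖t n w‖ ≤ 5 * (1/2)^n := by
    intro n w hw
    rw [ht]
    simp only [Complex.norm_eq_abs, map_mul, Complex.abs_ofReal]
    have h5 : Complex.abs (Complex.log (f^[n₀+n+1] w / (f^[n₀+n] w)^D)) ≤ 5 :=
      abs_log_le_five (hclose w hw n)
    have h2n : (2:ℝ)^n ≤ (D:ℝ)^(n₀+n+1) :=
      le_trans (pow_le_pow_right₀ one_le_two (by omega))
        (pow_le_pow_left₀ (by norm_num) hD2 _)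
    have hc : |(1:ℝ)/(D:ℝ)^(n₀+n+1)| ≤ (1/2:ℝ)^n := by
      rw [abs_of_pos (by positivity), one_div_pow]
      exact one_div_le_one_div_of_le (by positivity) h2n
    calc |(1:ℝ)/(D:ℝ)^(n₀+n+1)| * Complex.abs (Complex.log _) ≤ (1/2:ℝ)^n * 5 :=
          mul_le_mul hc h5 (Complex.abs.nonneg _) (by positivity)
      _ = 5 * (1/2)^n := by ring
  have hu_summable : Summable (fun n : ℕ => (5:ℝ) * (1/2)^n) :=
    (summable_geometric_of_lt_one (by norm_num) (by norm_num)).mul_left 5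
  -- each term is differentiable on U
  have htdiff : ∀ n : ℕ, DifferentiableOn ℂ (t n) U := by
    intro n
    intro w hw
    apply DifferentiableAt.differentiableWithinAt
    apply DifferentiableAt.const_mul
    have hmem : f^[n₀+n+1] w / (f^[n₀+n] w)^D ∈ Complex.slitPlane :=
      mem_slit_of_close (hclose w hw n)
    have hinner : DifferentiableAt ℂ (fun w => f^[n₀+n+1] w / (f^[n₀+n] w)^D) w := by
      apply DifferentiableAt.div ((hdiff (n₀+n+1)) w) (((hdiff (n₀+n)) w).pow D)
      exact pow_ne_zero D (hne w hw n)
    exact (Complex.differentiableAt_log hmem).comp w hinner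
  -- summability
  have hsum : ∀ w ∈ U, Summable (fun n => t n w) := by
    intro w hw
    apply Summable.of_norm_bounded hu_summable
    exact fun n => htbound n w hw
  -- the holomorphic function
  set F : ℂ → ℂ := fun w => c₀ w + ∑' n, t n w with hF
  have hc₀diff : DifferentiableOn ℂ c₀ U := by
    intro w hw
    apply DifferentiableAt.differentiableWithinAt
    apply DifferentiableAt.const_mul
    have hmem : f^[n₀] w / a ∈ Complex.slitPlane := hw.2
    exact (Complex.differentiableAt_log hmem).comp w (((hdiff n₀) w).div_const a)
  have hFdiff : DifferentiableOn ℂ F U := by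
    apply hc₀diff.add
    exact Complex.differentiableOn_tsum_of_summable_norm hu_summable htdiff hUopen
      (fun n w hw => htbound n w hw)
  refine ⟨U, F, hUopen, hz₀U, hFdiff, ?_⟩
  intro w hw
  -- real parts of the terms
  have hlogpos : ∀ k : ℕ, (0:ℝ) < Complex.abs (f^[n₀+k] w) := by
    intro k
    have := hiter w hw k
    linarith
  have hRe_t : ∀ n : ℕ, (t n w).re =
      (1/(D:ℝ)^(n₀+n+1)) * (Real.log (Complex.abs (f^[n₀+n+1] w))
        - (D:ℝ) * Real.log (Complex.abs (f^[n₀+n] w))) := by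
    intro n
    rw [ht]
    simp only [Complex.re_ofReal_mul]
    congr 1
    rw [Complex.log_re, Complex.norm_eq_abs, map_div₀, map_pow]
    have hnum : Complex.abs (f^[n₀+n+1] w) ≠ 0 := by
      have := hlogpos (n+1)
      rw [← Nat.add_assoc] at this
      exact ne_of_gt this
    have hden : Complex.abs (f^[n₀+n] w) ^ D ≠ 0 := by
      have := hlogpos n
      positivity
    rw [Real.log_div hnum hden, Real.log_pow]
  have hRe_c₀ : (c₀ w).re = (1/(D:ℝ)^n₀) * Real.log (Complex.abs (f^[n₀] w)) := by
    rw [hc₀]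
    simp only [Complex.re_ofReal_mul]
    congr 1
    rw [Complex.log_re, Complex.norm_eq_abs, map_div₀, haabs, div_one]
  -- telescoping partial sums
  have hS : ∀ N : ℕ, (c₀ w + ∑ n ∈ Finset.range N, t n w).re
      = (1/(D:ℝ)^(n₀+N)) * Real.log (Complex.abs (f^[n₀+N] w)) := by
    intro N
    induction N with
    | zero => simpa using hRe_c₀
    | succ N ih =>
        rw [Finset.sum_range_succ, ← add_assoc, Complex.add_re, ih, hRe_t N]
        have hne' : (D:ℝ) ≠ 0 := ne_of_gt hDpos
        have he : n₀ + (N+1) = n₀ + N + 1 := by omega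
        rw [he]
        field_simp
        ring
  -- limits
  have hts : Tendsto (fun N => c₀ w + ∑ n ∈ Finset.range N, t n w) atTop (𝓝 (F w)) :=
    tendsto_const_nhds.add (hsum w hw).hasSum.tendsto_sum_nat
  have h1 : Tendsto (fun N => (c₀ w + ∑ n ∈ Finset.range N, t n w).re)
      atTop (𝓝 ((F w).re)) := (Complex.continuous_re.tendsto _).comp hts
  have h2 : Tendsto (fun N : ℕ => (1 / (D : ℝ) ^ (N + n₀)) *
      max (Real.log (Complex.abs (f^[N + n₀] w))) 0) atTop (𝓝 (G w)) :=
    (hG w).comp (tendsto_add_atTop_nat n₀)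
  have h3 : (fun N : ℕ => (1 / (D : ℝ) ^ (N + n₀)) *
      max (Real.log (Complex.abs (f^[N + n₀] w))) 0)
      = fun N => (c₀ w + ∑ n ∈ Finset.range N, t n w).re := by
    funext N
    rw [hS N]
    have he : N + n₀ = n₀ + N := by omega
    rw [he]
    have hmax : max (Real.log (Complex.abs (f^[n₀+N] w))) 0
        = Real.log (Complex.abs (f^[n₀+N] w)) := by
      apply max_eq_left
      apply Real.log_nonneg
      have := hiter w hw N
      linarith
    rw [hmax]
  rw [h3] at h2
  exact tendsto_nhds_unique h2 h1

/-- The Green's function is harmonic on the complement of the filled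
Julia set: it is smooth there and its Laplacian
`∂²G/∂x² + ∂²G/∂y²` (second derivatives in the directions `1` and `I`) vanishes. -/
theorem green_function_harmonic (D : ℕ) (hD : 2 ≤ D) (P : Polynomial ℂ)
    (hmonic : P.Monic) (hdeg : P.natDegree = D) (G : ℂ → ℝ)
    (hG : ∀ z : ℂ, Tendsto (fun n : ℕ =>
        (1 / (D : ℝ) ^ n) *
          max (Real.log ‖(fun w => P.eval w)^[n] z‖) 0)
      atTop (𝓝 (G z))) :
    ContDiffOn ℝ (⊤ : ℕ∞) G
      {z : ℂ | Bornology.IsBounded (Set.range fun n : ℕ => (fun w => P.eval w)^[n] z)}ᶜ ∧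
    ∀ z ∈ {z : ℂ |
        Bornology.IsBounded (Set.range fun n : ℕ => (fun w => P.eval w)^[n] z)}ᶜ,
      fderiv ℝ (fun w => fderiv ℝ G w 1) z 1 +
        fderiv ℝ (fun w => fderiv ℝ G w Complex.I) z Complex.I = 0 := by
  constructor
  · intro z hz
    obtain ⟨U, F, hUopen, hzU, hFdiff, hrep⟩ := local_rep D hD P hmonic hdeg G hG z hz
    have hee : G =ᶠ[𝓝 z] fun w => (F w).re :=
      Filter.eventually_of_mem (hUopen.mem_nhds hzU) (fun w hw => hrep w hw)
    exact ((re_contDiffAt hUopen hFdiff hzU).congr_of_eventuallyEq hee).contDiffWithinAt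
  · intro z hz
    obtain ⟨U, F, hUopen, hzU, hFdiff, hrep⟩ := local_rep D hD P hmonic hdeg G hG z hz
    have hd1 : ∀ v : ℂ, (fun w => fderiv ℝ G w v)
        =ᶠ[𝓝 z] (fun w => fderiv ℝ (fun w => (F w).re) w v) := by
      intro v
      filter_upwards [hUopen.mem_nhds hzU] with w hw
      have hee : G =ᶠ[𝓝 w] fun w => (F w).re :=
        Filter.eventually_of_mem (hUopen.mem_nhds hw) (fun w' hw' => hrep w' hw')
      rw [hee.fderiv_eq]
    have e1 : fderiv ℝ (fun w => fderiv ℝ G w 1) z 1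
        = fderiv ℝ (fun w => fderiv ℝ (fun w => (F w).re) w 1) z 1 := by
      rw [(hd1 1).fderiv_eq]
    have e2 : fderiv ℝ (fun w => fderiv ℝ G w Complex.I) z Complex.I
        = fderiv ℝ (fun w => fderiv ℝ (fun w => (F w).re) w Complex.I) z Complex.I := by
      rw [(hd1 Complex.I).fderiv_eq]
    rw [e1, e2]
    exact harmonic_of_holo hUopen hFdiff hzU
end

section
/- Let P : ℂ → ℂ be a monic polynomial of degree D ≥ 2 with Green's function G. Then there exist R > 0 and an injective holomorphic function B on the region U = {z ∈ ℂ : |z| > R} (the Böttcher coordinate of P) such that B(z)/z → 1 as z → ∞, B(P(z)) = (B(z))^D for every z ∈ U with P(z) ∈ U, and log |B(z)| = G(z) for every z ∈ U. -/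
/-!
Write `f w = w ^ D * (1 + u w)` with `‖u w‖ ≤ A / ‖w‖`, as for a monic polynomial of degree `D`
with `A` the sum of the norms of its lower coefficients. On `‖z‖ ≥ 2 + 2A` the orbit of `z` escapes,
so `L z = ∑ₙ D^{-(n+1)} log (f (fⁿ z) / (fⁿ z) ^ D)` converges locally uniformly with
`‖L z‖ ≤ 2A / ‖z‖`, and `B z = z * exp (L z)` is holomorphic with `B z / z → 1`. Shifting the series
gives `D * L z = log (f z / z ^ D) + L (f z)`, that is `B ∘ f = B ^ D`; iterating,
`D^{-n} log ‖fⁿ z‖ = log ‖B z‖ - D^{-n} Re L (fⁿ z) → log ‖B z‖`. Finally `B - id` is bounded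
by `4A`, so by the Cauchy estimate its derivative is at most `1/2` far out, and then
`B = id + (B - id)` cannot identify two points there.
-/

open Filter Topology Polynomial Set Metric

theorem Polynomial.Monic.norm_eval_sub_pow_natDegree_le {𝕜 : Type*} [NormedField 𝕜]
    {P : 𝕜[X]} (hP : P.Monic) {w : 𝕜} (hw : 1 ≤ ‖w‖) :
    ‖P.eval w - w ^ P.natDegree‖ ≤
      (∑ i ∈ Finset.range P.natDegree, ‖P.coeff i‖) * ‖w‖ ^ (P.natDegree - 1) := by
  rw [eval_eq_sum_range, Finset.sum_range_succ, hP.coeff_natDegree, one_mul,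
    add_sub_cancel_right, Finset.sum_mul]
  refine (norm_sum_le _ _).trans (Finset.sum_le_sum fun i hi => ?_)
  rw [norm_mul, norm_pow]
  gcongr
  exact Nat.le_sub_one_of_lt (Finset.mem_range.mp hi)

theorem Polynomial.Monic.norm_eval_div_pow_natDegree_sub_one_le {𝕜 : Type*} [NormedField 𝕜]
    {P : 𝕜[X]} (hP : P.Monic) {w : 𝕜} (hw : 1 ≤ ‖w‖) :
    ‖P.eval w / w ^ P.natDegree - 1‖ ≤ (∑ i ∈ Finset.range P.natDegree, ‖P.coeff i‖) / ‖w‖ := by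
  have hw0 : 0 < ‖w‖ := by linarith
  rw [div_sub_one (pow_ne_zero _ (norm_pos_iff.mp hw0)), norm_div, norm_pow,
    div_le_div_iff₀ (by positivity) hw0]
  rcases Nat.eq_zero_or_pos P.natDegree with hd | hd
  · have h := hP.norm_eval_sub_pow_natDegree_le hw
    simp_all
  calc ‖P.eval w - w ^ P.natDegree‖ * ‖w‖
      ≤ (∑ i ∈ Finset.range P.natDegree, ‖P.coeff i‖) * ‖w‖ ^ (P.natDegree - 1) * ‖w‖ := by
        gcongr; exact hP.norm_eval_sub_pow_natDegree_le hw
    _ = (∑ i ∈ Finset.range P.natDegree, ‖P.coeff i‖) * ‖w‖ ^ P.natDegree := by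
        rw [mul_assoc, ← pow_succ, Nat.sub_add_cancel hd]

section Exterior

variable {g : ℂ → ℂ} {r M : ℝ}

theorem norm_deriv_le_of_norm_le_on_exterior (hr : 0 ≤ r)
    (hg : DifferentiableOn ℂ g {z | r < ‖z‖}) (hM : ∀ z, r < ‖z‖ → ‖g z‖ ≤ M) {z : ℂ}
    (hz : 2 * r < ‖z‖) : ‖deriv g z‖ ≤ 2 * M / ‖z‖ := by
  have hρ : 0 < ‖z‖ / 2 := by linarith
  have hball : closedBall z (‖z‖ / 2) ⊆ {w | r < ‖w‖} := fun w hw => by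
    have := norm_sub_norm_le z w
    rw [← dist_eq_norm, dist_comm] at this
    simp only [mem_ofPred_eq]
    linarith [mem_closedBall.mp hw]
  have hd : DiffContOnCl ℂ g (ball z (‖z‖ / 2)) :=
    (hg.mono (closure_ball z hρ.ne' ▸ hball)).diffContOnCl
  calc ‖deriv g z‖ ≤ M / (‖z‖ / 2) := Complex.norm_deriv_le_of_forall_mem_sphere_norm_le hρ hd
        fun w hw => hM w (hball (sphere_subset_closedBall hw))
    _ = 2 * M / ‖z‖ := by field_simp

theorem injOn_add_of_norm_le_on_exterior (hr : 0 ≤ r)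
    (hg : DifferentiableOn ℂ g {z | r < ‖z‖}) (hM : ∀ z, r < ‖z‖ → ‖g z‖ ≤ M) :
    InjOn (fun z => z + g z) {z | 2 * r + 6 * M < ‖z‖} := by
  intro z₁ hz₁ z₂ hz₂ heq
  simp only [mem_ofPred_eq] at hz₁ hz₂
  have hM0 : 0 ≤ M := (norm_nonneg _).trans (hM (r + 1) (by
    rw [← Complex.ofReal_one, ← Complex.ofReal_add, Complex.norm_real,
      Real.norm_of_nonneg (by linarith)]
    linarith))
  have hnear : dist z₁ z₂ ≤ 2 * M := by
    rw [dist_eq_norm, show z₁ - z₂ = g z₂ - g z₁ by linear_combination heq]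
    linarith [norm_sub_le (g z₂) (g z₁), hM z₁ (by linarith), hM z₂ (by linarith)]
  have hfar : ∀ w ∈ closedBall z₂ (2 * M), 2 * r + 4 * M < ‖w‖ := fun w hw => by
    have := norm_sub_norm_le z₂ w
    rw [← dist_eq_norm, dist_comm] at this
    linarith [mem_closedBall.mp hw]
  have hlip := (convex_closedBall z₂ (2 * M)).norm_image_sub_le_of_norm_deriv_le
    (f := g) (C := 1 / 2)
    (fun w hw => hg.differentiableAt ((isOpen_lt continuous_const continuous_norm).mem_nhds
      (by simp only [mem_ofPred_eq]; linarith [hfar w hw])))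
    (fun w hw => (norm_deriv_le_of_norm_le_on_exterior hr hg hM (by linarith [hfar w hw])).trans
      (by rw [div_le_iff₀ (by linarith [hfar w hw])]; linarith [hfar w hw]))
    (mem_closedBall_self (by linarith)) hnear
  rw [show g z₁ - g z₂ = -(z₁ - z₂) by linear_combination heq, norm_neg] at hlip
  exact sub_eq_zero.mp (norm_le_zero_iff.mp (by linarith [norm_nonneg (z₁ - z₂)]))

end Exterior

noncomputable def bottcherLogTerm (f : ℂ → ℂ) (D n : ℕ) (z : ℂ) : ℂ :=
  ((D : ℂ) ^ (n + 1))⁻¹ * Complex.log (f (f^[n] z) / f^[n] z ^ D)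

noncomputable def bottcherLog (f : ℂ → ℂ) (D : ℕ) (z : ℂ) : ℂ :=
  ∑' n, bottcherLogTerm f D n z

noncomputable def bottcher (f : ℂ → ℂ) (D : ℕ) (z : ℂ) : ℂ :=
  z * Complex.exp (bottcherLog f D z)

section Bottcher

variable {f : ℂ → ℂ} {D : ℕ} {A : ℝ} {z w : ℂ}

theorem bottcherLogTerm_succ (n : ℕ) (z : ℂ) :
    bottcherLogTerm f D (n + 1) z = (D : ℂ)⁻¹ * bottcherLogTerm f D n (f z) := by
  simp only [bottcherLogTerm, Function.iterate_succ_apply, pow_succ' _ (n + 1), mul_inv,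
    mul_assoc]

theorem log_norm_bottcher (hz : z ≠ 0) :
    Real.log ‖bottcher f D z‖ = Real.log ‖z‖ + (bottcherLog f D z).re := by
  rw [bottcher, norm_mul, Complex.norm_exp,
    Real.log_mul (norm_ne_zero_iff.mpr hz) (Real.exp_ne_zero _), Real.log_exp]

variable (hf : ∀ w : ℂ, 1 ≤ ‖w‖ → ‖f w / w ^ D - 1‖ ≤ A / ‖w‖)
include hf

theorem nonneg_of_norm_div_pow_sub_one_le : 0 ≤ A := by
  simpa using (norm_nonneg _).trans (hf 1 (by simp))

theorem norm_div_pow_sub_one_le_half (hw : 2 + 2 * A ≤ ‖w‖) : ‖f w / w ^ D - 1‖ ≤ 1 / 2 := by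
  have hA := nonneg_of_norm_div_pow_sub_one_le hf
  refine (hf w (by linarith)).trans ?_
  rw [div_le_iff₀ (by linarith)]
  linarith

theorem div_pow_mem_slitPlane (hw : 2 + 2 * A ≤ ‖w‖) : f w / w ^ D ∈ Complex.slitPlane := by
  simpa using Complex.mem_slitPlane_of_norm_lt_one
    ((norm_div_pow_sub_one_le_half hf hw).trans_lt (by norm_num))

theorem norm_log_div_pow_le (hw : 2 + 2 * A ≤ ‖w‖) :
    ‖Complex.log (f w / w ^ D)‖ ≤ 2 * A / ‖w‖ := by
  have hA := nonneg_of_norm_div_pow_sub_one_le hf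
  have hlog := Complex.norm_log_one_add_half_le_self (norm_div_pow_sub_one_le_half hf hw)
  rw [add_sub_cancel] at hlog
  have hAw : 0 ≤ A / ‖w‖ := by positivity
  calc _ ≤ 3 / 2 * ‖f w / w ^ D - 1‖ := hlog
    _ ≤ 3 / 2 * (A / ‖w‖) := by gcongr; exact hf w (by linarith)
    _ ≤ 2 * A / ‖w‖ := by rw [mul_div_assoc]; linarith

variable (hD : 2 ≤ D)
include hD

theorem norm_le_norm_apply (hw : 2 + 2 * A ≤ ‖w‖) : ‖w‖ ≤ ‖f w‖ := by
  have hA := nonneg_of_norm_div_pow_sub_one_le hf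
  have hratio : 1 / 2 ≤ ‖f w / w ^ D‖ := by
    have := norm_sub_norm_le (1 : ℂ) (f w / w ^ D)
    rw [norm_one, norm_sub_rev] at this
    linarith [norm_div_pow_sub_one_le_half hf hw]
  have hw0 : 0 < ‖w‖ := by linarith
  calc ‖w‖ ≤ 1 / 2 * ‖w‖ ^ 2 := by nlinarith
    _ ≤ 1 / 2 * ‖w‖ ^ D := by gcongr; linarith
    _ ≤ ‖f w / w ^ D‖ * ‖w‖ ^ D := by gcongr
    _ = ‖f w‖ := by rw [norm_div, norm_pow, div_mul_cancel₀ _ (by positivity)]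

theorem norm_le_norm_iterate (hz : 2 + 2 * A ≤ ‖z‖) (n : ℕ) : ‖z‖ ≤ ‖f^[n] z‖ := by
  induction n with
  | zero => rfl
  | succ n ih =>
    rw [Function.iterate_succ_apply']
    exact ih.trans (norm_le_norm_apply hf hD (hz.trans ih))

theorem norm_bottcherLogTerm_le (hz : 2 + 2 * A ≤ ‖z‖) (n : ℕ) :
    ‖bottcherLogTerm f D n z‖ ≤ 2 * A / ‖z‖ / 2 / 2 ^ n := by
  have hA := nonneg_of_norm_div_pow_sub_one_le hf
  have hzn := norm_le_norm_iterate hf hD hz n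
  have hDn : (2 : ℝ) ^ (n + 1) ≤ ‖(D : ℂ) ^ (n + 1)‖ := by
    rw [norm_pow, Complex.norm_natCast]
    gcongr
    exact_mod_cast hD
  rw [bottcherLogTerm, norm_mul, norm_inv]
  calc _ ≤ ((2 : ℝ) ^ (n + 1))⁻¹ * (2 * A / ‖z‖) := by
        gcongr
        exact (norm_log_div_pow_le hf (hz.trans hzn)).trans
          (div_le_div_of_nonneg_left (by positivity) (by linarith) hzn)
    _ = 2 * A / ‖z‖ / 2 / 2 ^ n := by ring

theorem summable_bottcherLogTerm (hz : 2 + 2 * A ≤ ‖z‖) :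
    Summable fun n => bottcherLogTerm f D n z :=
  .of_norm_bounded (summable_geometric_two' _) (norm_bottcherLogTerm_le hf hD hz)

theorem norm_bottcherLog_le (hz : 2 + 2 * A ≤ ‖z‖) : ‖bottcherLog f D z‖ ≤ 2 * A / ‖z‖ :=
  tsum_of_norm_bounded (hasSum_geometric_two' _) (norm_bottcherLogTerm_le hf hD hz)

theorem norm_bottcherLog_le_one (hz : 2 + 2 * A ≤ ‖z‖) : ‖bottcherLog f D z‖ ≤ 1 := by
  refine (norm_bottcherLog_le hf hD hz).trans ?_
  rw [div_le_one (by linarith [nonneg_of_norm_div_pow_sub_one_le hf])]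
  linarith

theorem differentiableOn_bottcherLogTerm (hfd : Differentiable ℂ f) (n : ℕ) :
    DifferentiableOn ℂ (bottcherLogTerm f D n) {z | 2 + 2 * A < ‖z‖} := fun z hz => by
  have hA := nonneg_of_norm_div_pow_sub_one_le hf
  have hiter := hfd.iterate n
  have hw : 2 + 2 * A ≤ ‖f^[n] z‖ :=
    (le_of_lt hz).trans (norm_le_norm_iterate hf hD (le_of_lt hz) n)
  have hne : f^[n] z ^ D ≠ 0 := pow_ne_zero _ (norm_pos_iff.mp (by linarith))
  have hquot : DifferentiableAt ℂ (fun z => f (f^[n] z) / f^[n] z ^ D) z :=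
    ((hfd _).comp z (hiter z)).div ((hiter z).pow D) hne
  exact ((hquot.clog (div_pow_mem_slitPlane hf hw)).const_mul _).differentiableWithinAt

theorem differentiableOn_bottcherLog (hfd : Differentiable ℂ f) :
    DifferentiableOn ℂ (bottcherLog f D) {z | 2 + 2 * A < ‖z‖} := by
  have hA := nonneg_of_norm_div_pow_sub_one_le hf
  refine Complex.differentiableOn_tsum_of_summable_norm
    (summable_geometric_two' (2 * A / (2 + 2 * A))) (differentiableOn_bottcherLogTerm hf hD hfd)
    (isOpen_lt continuous_const continuous_norm)
    fun n z hz => (norm_bottcherLogTerm_le hf hD (le_of_lt hz) n).trans ?_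
  gcongr
  exact le_of_lt hz

theorem differentiableOn_bottcher (hfd : Differentiable ℂ f) :
    DifferentiableOn ℂ (bottcher f D) {z | 2 + 2 * A < ‖z‖} :=
  differentiableOn_id.mul (differentiableOn_bottcherLog hf hD hfd).cexp

theorem bottcherLog_eq (hz : 2 + 2 * A ≤ ‖z‖) :
    bottcherLog f D z = (D : ℂ)⁻¹ * (Complex.log (f z / z ^ D) + bottcherLog f D (f z)) := by
  rw [bottcherLog, (summable_bottcherLogTerm hf hD hz).tsum_eq_zero_add]
  simp only [bottcherLogTerm_succ, tsum_mul_left, mul_add]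
  simp [bottcherLogTerm, bottcherLog]

theorem bottcher_apply (hz : 2 + 2 * A ≤ ‖z‖) : bottcher f D (f z) = bottcher f D z ^ D := by
  have hz0 : z ≠ 0 := norm_pos_iff.mp (by linarith [nonneg_of_norm_div_pow_sub_one_le hf])
  have hD0 : (D : ℂ) ≠ 0 := by exact_mod_cast (by omega : D ≠ 0)
  rw [bottcher, bottcher, mul_pow, ← Complex.exp_nat_mul, bottcherLog_eq hf hD hz,
    mul_inv_cancel_left₀ hD0, Complex.exp_add,
    Complex.exp_log (Complex.slitPlane_ne_zero (div_pow_mem_slitPlane hf hz))]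
  field_simp

theorem bottcher_iterate (hz : 2 + 2 * A ≤ ‖z‖) (n : ℕ) :
    bottcher f D (f^[n] z) = bottcher f D z ^ D ^ n := by
  induction n with
  | zero => simp
  | succ n ih =>
    rw [Function.iterate_succ_apply',
      bottcher_apply hf hD (hz.trans (norm_le_norm_iterate hf hD hz n)), ih, ← pow_mul, pow_succ]

theorem tendsto_log_norm_iterate (hz : 2 + 2 * A ≤ ‖z‖) :
    Tendsto (fun n => ((D : ℝ) ^ n)⁻¹ * Real.log ‖f^[n] z‖) atTop
      (𝓝 (Real.log ‖bottcher f D z‖)) := by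
  have hA := nonneg_of_norm_div_pow_sub_one_le hf
  have key : ∀ n, ((D : ℝ) ^ n)⁻¹ * Real.log ‖f^[n] z‖ =
      Real.log ‖bottcher f D z‖ - ((D : ℝ) ^ n)⁻¹ * (bottcherLog f D (f^[n] z)).re := by
    intro n
    have h := log_norm_bottcher (f := f) (D := D)
      (norm_pos_iff.mp (by linarith [norm_le_norm_iterate hf hD hz n]) : f^[n] z ≠ 0)
    rw [bottcher_iterate hf hD hz, norm_pow, Real.log_pow] at h
    push_cast at h
    field_simp
    linarith
  have hsmall :
      Tendsto (fun n => ((D : ℝ) ^ n)⁻¹ * (bottcherLog f D (f^[n] z)).re) atTop (𝓝 0) := by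
    have hinv : Tendsto (fun n => ((D : ℝ) ^ n)⁻¹) atTop (𝓝 0) :=
      tendsto_inv_atTop_zero.comp (tendsto_pow_atTop_atTop_of_one_lt (by exact_mod_cast hD))
    refine squeeze_zero_norm (fun n => ?_) hinv
    rw [norm_mul, norm_inv, norm_pow, Real.norm_natCast]
    refine mul_le_of_le_one_right (by positivity) ?_
    exact (Complex.abs_re_le_norm _).trans
      (norm_bottcherLog_le_one hf hD (hz.trans (norm_le_norm_iterate hf hD hz n)))
  simpa [key] using hsmall.const_sub (Real.log ‖bottcher f D z‖)

theorem tendsto_bottcher_div_self :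
    Tendsto (fun z => bottcher f D z / z) (Bornology.cobounded ℂ) (𝓝 1) := by
  have hlog : Tendsto (bottcherLog f D) (Bornology.cobounded ℂ) (𝓝 0) :=
    squeeze_zero_norm' ((tendsto_norm_cobounded_atTop.eventually_ge_atTop (2 + 2 * A)).mono
      fun z hz => norm_bottcherLog_le hf hD hz)
      (tendsto_const_nhds.div_atTop tendsto_norm_cobounded_atTop)
  have hexp := (Complex.continuous_exp.tendsto 0).comp hlog
  rw [Complex.exp_zero] at hexp
  refine hexp.congr' ?_
  filter_upwards [tendsto_norm_cobounded_atTop.eventually_gt_atTop 0] with z hz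
  rw [bottcher, mul_div_cancel_left₀ _ (norm_pos_iff.mp hz), Function.comp_apply]

theorem norm_bottcher_sub_self_le (hz : 2 + 2 * A ≤ ‖z‖) : ‖bottcher f D z - z‖ ≤ 4 * A := by
  have hz0 : 0 < ‖z‖ := by linarith [nonneg_of_norm_div_pow_sub_one_le hf]
  rw [bottcher, ← mul_sub_one, norm_mul]
  calc _ ≤ ‖z‖ * (2 * (2 * A / ‖z‖)) := by
        gcongr
        exact (Complex.norm_exp_sub_one_le (norm_bottcherLog_le_one hf hD hz)).trans
          (by gcongr; exact norm_bottcherLog_le hf hD hz)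
    _ = 4 * A := by field_simp; ring

-- `4 + 28 * A = 2 * (2 + 2 * A) + 6 * (4 * A)`, the radius of `injOn_add_of_norm_le_on_exterior`
theorem injOn_bottcher (hfd : Differentiable ℂ f) :
    InjOn (bottcher f D) {z | 4 + 28 * A < ‖z‖} := by
  have hA := nonneg_of_norm_div_pow_sub_one_le hf
  have hinj := injOn_add_of_norm_le_on_exterior (g := fun z => bottcher f D z - z) (by linarith)
    ((differentiableOn_bottcher hf hD hfd).sub differentiableOn_id)
    fun z hz => norm_bottcher_sub_self_le hf hD (le_of_lt hz)
  refine (hinj.mono fun z hz => ?_).congr fun z _ => add_sub_cancel z _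
  simp only [mem_ofPred_eq] at hz ⊢
  linarith

end Bottcher

/-- Existence of the Böttcher coordinate near infinity: an injective
holomorphic map `B` on `{|z| > R}` with `B(z)/z → 1` at `∞`, conjugating `P` to
`w ↦ w^D`, and satisfying `log |B(z)| = G(z)`. -/
theorem bottcher_coordinate_exists (D : ℕ) (hD : 2 ≤ D) (P : Polynomial ℂ)
    (hmonic : P.Monic) (hdeg : P.natDegree = D) (G : ℂ → ℝ)
    (hG : ∀ z : ℂ, Tendsto (fun n : ℕ =>
        (1 / (D : ℝ) ^ n) *
          max (Real.log ‖(fun w => P.eval w)^[n] z‖) 0)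
      atTop (𝓝 (G z))) :
    ∃ R : ℝ, 0 < R ∧ ∃ B : ℂ → ℂ,
      Set.InjOn B {z : ℂ | R < ‖z‖} ∧
      DifferentiableOn ℂ B {z : ℂ | R < ‖z‖} ∧
      Tendsto (fun z : ℂ => B z / z) (Bornology.cobounded ℂ) (𝓝 1) ∧
      (∀ z : ℂ, R < ‖z‖ → R < ‖P.eval z‖ →
        B (P.eval z) = (B z) ^ D) ∧
      (∀ z : ℂ, R < ‖z‖ → Real.log ‖B z‖ = G z) := by
  subst hdeg
  set A := ∑ i ∈ Finset.range P.natDegree, ‖P.coeff i‖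
  have hP : ∀ w : ℂ, 1 ≤ ‖w‖ → ‖P.eval w / w ^ P.natDegree - 1‖ ≤ A / ‖w‖ :=
    fun w hw => hmonic.norm_eval_div_pow_natDegree_sub_one_le hw
  have hA := nonneg_of_norm_div_pow_sub_one_le hP
  have hR : ∀ z : ℂ, 4 + 28 * A < ‖z‖ → 2 + 2 * A ≤ ‖z‖ := fun z hz => by linarith
  refine ⟨4 + 28 * A, by positivity, bottcher (fun w => P.eval w) P.natDegree,
    injOn_bottcher hP hD P.differentiable,
    (differentiableOn_bottcher hP hD P.differentiable).mono fun z hz => by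
      simp only [mem_ofPred_eq] at hz ⊢; linarith,
    tendsto_bottcher_div_self hP hD, fun z hz _ => bottcher_apply hP hD (hR z hz), fun z hz => ?_⟩
  refine tendsto_nhds_unique (tendsto_log_norm_iterate hP hD (hR z hz)) ((hG z).congr fun n => ?_)
  have hzn := (hR z hz).trans (norm_le_norm_iterate hP hD (hR z hz) n)
  rw [max_eq_left (Real.log_nonneg (by linarith)), one_div]
end

section
/- Let P : ℂ → ℂ be a monic polynomial of degree D ≥ 2, with filled Julia set K_P and Green's function G. For every z ∈ ℂ ∖ K_P, the (real Fréchet) derivative of G vanishes at z if and only if P^{∘n}(z) is a critical point of P (i.e., P'(P^{∘n}(z)) = 0) for some integer n ≥ 0. -/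
/-!
Outside a large disc, `G z = log ‖z‖ + Re H z`, where
`H = ∑ₖ D⁻ᵏ⁻¹ log (P (Pᵏ z) / (Pᵏ z) ^ D)` is holomorphic and small; by the Cauchy estimate
`H'` is too small to cancel `1 / z`, so `dG ≠ 0` there. The functional equation
`G ∘ P = D • G` and the chain rule give `dG_z = D⁻ᴺ • dG_{Pᴺ z} ∘ (Pᴺ)'(z)`, and for an
escaping `z` and large `N` the point `Pᴺ z` lies in that disc, so `dG_z = 0` iff
`(Pᴺ)'(z) = ∏_{k<N} P'(Pᵏ z) = 0`.
-/

open Filter Topology Polynomial Bornology Set Complex Metric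

theorem Polynomial.tendsto_eval_div_pow_natDegree {𝕜 : Type*} [NormedField 𝕜] (P : 𝕜[X]) :
    Tendsto (fun y => P.eval y / y ^ P.natDegree) (cobounded 𝕜) (𝓝 P.leadingCoeff) := by
  have hrev : Tendsto (fun y : 𝕜 => P.reverse.eval y⁻¹) (cobounded 𝕜) (𝓝 P.leadingCoeff) := by
    rw [← coeff_zero_reverse, coeff_zero_eq_eval_zero]
    exact (P.reverse.continuous.tendsto 0).comp tendsto_inv₀_cobounded
  refine hrev.congr' ((eventually_ne_cobounded 0).mono fun y hy => ?_)
  let := invertibleOfNonzero hy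
  have := eval₂_reverse_mul_pow (RingHom.id 𝕜) y P
  rwa [eval₂_id, eval₂_id, invOf_eq_inv, ← eq_div_iff (pow_ne_zero _ hy)] at this

theorem hasDerivAt_iterate {𝕜 : Type*} [NontriviallyNormedField 𝕜] {f : 𝕜 → 𝕜}
    (hf : Differentiable 𝕜 f) (n : ℕ) (z : 𝕜) :
    HasDerivAt f^[n] (∏ k ∈ Finset.range n, deriv f (f^[k] z)) z := by
  induction n with
  | zero => simpa using hasDerivAt_id z
  | succ n ih =>
    rw [Finset.prod_range_succ, mul_comm, Function.iterate_succ']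
    exact (hf _).hasDerivAt.comp z ih

theorem ContinuousLinearMap.comp_smul_one_eq_zero_iff {F : Type*} [NormedAddCommGroup F]
    [NormedSpace ℝ F] {L : ℂ →L[ℝ] F} (hL : L ≠ 0) {c : ℂ} :
    L.comp (c • (1 : ℂ →L[ℝ] ℂ)) = 0 ↔ c = 0 := by
  refine ⟨fun h => by_contra fun hc => hL ?_, fun hc => by subst hc; ext; simp⟩
  ext v
  simpa [hc] using congr($h (c⁻¹ * v))

theorem HasDerivAt.differentiableAt_and_fderiv_ne_zero_of_eventuallyEq_re {g : ℂ → ℂ}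
    {g' z : ℂ} (hg : HasDerivAt g g' z) (hg' : g' ≠ 0) {G : ℂ → ℝ}
    (hG : G =ᶠ[𝓝 z] fun y => (g y).re) : DifferentiableAt ℝ G z ∧ fderiv ℝ G z ≠ 0 := by
  have hL : HasFDerivAt G (reCLM.comp (g' • (1 : ℂ →L[ℝ] ℂ))) z :=
    (reCLM.hasFDerivAt.comp z hg.complexToReal_fderiv).congr_of_eventuallyEq hG
  have hre : reCLM ≠ 0 := fun h => by simpa using congr($h 1)
  refine ⟨hL.differentiableAt, ?_⟩
  rwa [hL.fderiv, Ne, ContinuousLinearMap.comp_smul_one_eq_zero_iff hre]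

theorem eq_mul_of_tendsto_div_pow_iterate {α : Type*} {f : α → α} {u G : α → ℝ} {d : ℝ}
    (hd : d ≠ 0) (hG : ∀ z, Tendsto (fun n : ℕ => 1 / d ^ n * u (f^[n] z)) atTop (𝓝 (G z)))
    (z : α) : G (f z) = d * G z := by
  refine tendsto_nhds_unique (hG (f z)) ?_
  have := ((hG z).comp (tendsto_add_atTop_nat 1)).const_mul d
  refine this.congr fun n => ?_
  simp only [Function.comp_apply, Function.iterate_succ_apply, pow_succ]
  field_simp

theorem fderiv_eq_zero_iff_of_map_eq_mul {f : ℂ → ℂ} {G : ℂ → ℝ} {d : ℝ} (hd : d ≠ 0)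
    (hfG : ∀ w, G (f w) = d * G w) {N : ℕ} {z c : ℂ} (hc : HasDerivAt f^[N] c z)
    (hG : DifferentiableAt ℝ G (f^[N] z)) (hG0 : fderiv ℝ G (f^[N] z) ≠ 0) :
    fderiv ℝ G z = 0 ↔ c = 0 := by
  have hiter : ∀ w, G w = (d ^ N)⁻¹ * G (f^[N] w) := fun w => by
    rw [(Function.Semiconj.iterate_right (f := G) (gb := (d * ·)) hfG N w),
      mul_left_iterate_apply, inv_mul_cancel_left₀ (pow_ne_zero _ hd)]
  have hderiv :
      HasFDerivAt G ((d ^ N)⁻¹ • (fderiv ℝ G (f^[N] z)).comp (c • (1 : ℂ →L[ℝ] ℂ))) z :=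
    ((hG.hasFDerivAt.comp z hc.complexToReal_fderiv).const_mul _).congr_of_eventuallyEq
      (.of_forall hiter)
  rw [hderiv.fderiv, smul_eq_zero, or_iff_right (inv_ne_zero (pow_ne_zero _ hd)),
    ContinuousLinearMap.comp_smul_one_eq_zero_iff hG0]

theorem eventually_lt_norm_iterate_of_not_isBounded {E : Type*} [SeminormedAddCommGroup E]
    {f : E → E} {r : ℝ} (hf : MapsTo f {w | r < ‖w‖} {w | r < ‖w‖}) {z : E}
    (hz : ¬ IsBounded (range fun n => f^[n] z)) : ∀ᶠ n in atTop, r < ‖f^[n] z‖ := by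
  obtain ⟨m, hm⟩ : ∃ m, r < ‖f^[m] z‖ := by
    contrapose! hz
    exact isBounded_iff_forall_norm_le.2 ⟨r, forall_mem_range.2 hz⟩
  filter_upwards [eventually_ge_atTop m] with n hn
  rw [← Nat.sub_add_cancel hn, Function.iterate_add_apply]
  exact hf.iterate (n - m) hm

-- `1 / 16` is small enough for the Cauchy estimate in `norm_deriv_boettcherLogRatio_lt`.
structure IsEscapeRadius (f : ℂ → ℂ) (D : ℕ) (R : ℝ) : Prop where
  two_le : 2 ≤ R
  norm_div_pow_sub_one_le : ∀ w, R ≤ ‖w‖ → ‖f w / w ^ D - 1‖ ≤ 1 / 16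

-- `log (φ z / z)` for the Böttcher coordinate `φ` of `f`.
noncomputable def boettcherLogRatio (f : ℂ → ℂ) (D : ℕ) (z : ℂ) : ℂ :=
  ∑' k : ℕ, log (f (f^[k] z) / f^[k] z ^ D) / (D ^ (k + 1) : ℕ)

namespace IsEscapeRadius

variable {f : ℂ → ℂ} {D : ℕ} {R : ℝ}

theorem ne_zero (h : IsEscapeRadius f D R) {w : ℂ} (hw : R ≤ ‖w‖) : w ≠ 0 :=
  norm_pos_iff.1 (by linarith [h.two_le])

theorem norm_lt_norm_apply (h : IsEscapeRadius f D R) (hD : 2 ≤ D) {w : ℂ} (hw : R ≤ ‖w‖) :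
    ‖w‖ < ‖f w‖ := by
  have hq : 15 / 16 ≤ ‖f w / w ^ D‖ := by
    have := norm_sub_norm_le 1 (f w / w ^ D)
    rw [norm_sub_rev, norm_one] at this
    linarith [h.norm_div_pow_sub_one_le w hw]
  have hw2 : 2 * ‖w‖ ≤ ‖w‖ ^ D :=
    calc 2 * ‖w‖ ≤ ‖w‖ ^ 2 := by nlinarith [h.two_le]
      _ ≤ ‖w‖ ^ D := pow_le_pow_right₀ (by linarith [h.two_le]) hD
  rw [← div_mul_cancel₀ (f w) (pow_ne_zero D (h.ne_zero hw)), norm_mul, norm_pow]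
  nlinarith [h.two_le]

theorem mapsTo (h : IsEscapeRadius f D R) (hD : 2 ≤ D) {r : ℝ} (hr : R ≤ r) :
    MapsTo f {w | r < ‖w‖} {w | r < ‖w‖} :=
  fun _ hw => hw.out.trans (h.norm_lt_norm_apply hD (hr.trans hw.out.le))

theorem mem_slitPlane (h : IsEscapeRadius f D R) {w : ℂ} (hw : R ≤ ‖w‖) :
    f w / w ^ D ∈ slitPlane := by
  simpa using mem_slitPlane_of_norm_lt_one ((h.norm_div_pow_sub_one_le w hw).trans_lt
    (by norm_num))

theorem norm_log_le (h : IsEscapeRadius f D R) {w : ℂ} (hw : R ≤ ‖w‖) :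
    ‖log (f w / w ^ D)‖ ≤ 3 / 32 := by
  have hq := h.norm_div_pow_sub_one_le w hw
  calc ‖log (f w / w ^ D)‖ = ‖log (1 + (f w / w ^ D - 1))‖ := by rw [add_sub_cancel]
    _ ≤ 3 / 2 * ‖f w / w ^ D - 1‖ := norm_log_one_add_half_le_self (hq.trans (by norm_num))
    _ ≤ 3 / 32 := by linarith

theorem norm_log_div_pow_le (h : IsEscapeRadius f D R) (hD : 2 ≤ D) {z : ℂ} (hz : R < ‖z‖)
    (k : ℕ) : ‖log (f (f^[k] z) / f^[k] z ^ D) / (D ^ (k + 1) : ℕ)‖ ≤ 3 / 32 * (1 / 2) ^ k := by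
  have hlog := h.norm_log_le ((h.mapsTo hD le_rfl).iterate k hz).out.le
  have hpow : (2 : ℝ) ^ k ≤ (D ^ (k + 1) : ℕ) := by
    push_cast
    calc (2 : ℝ) ^ k ≤ 2 ^ (k + 1) := pow_le_pow_right₀ (by norm_num) k.le_succ
      _ ≤ D ^ (k + 1) := pow_le_pow_left₀ (by norm_num) (by exact_mod_cast hD) _
  rw [norm_div, Complex.norm_natCast, div_pow, one_pow, mul_one_div]
  gcongr

theorem summable_log_div_pow (h : IsEscapeRadius f D R) (hD : 2 ≤ D) {z : ℂ} (hz : R < ‖z‖) :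
    Summable fun k : ℕ => log (f (f^[k] z) / f^[k] z ^ D) / (D ^ (k + 1) : ℕ) :=
  .of_norm_bounded (summable_geometric_two.mul_left _) (h.norm_log_div_pow_le hD hz)

theorem norm_boettcherLogRatio_le (h : IsEscapeRadius f D R) (hD : 2 ≤ D) {z : ℂ}
    (hz : R < ‖z‖) : ‖boettcherLogRatio f D z‖ ≤ 3 / 16 :=
  (tsum_of_norm_bounded (hasSum_geometric_two.mul_left _) (h.norm_log_div_pow_le hD hz)).trans_eq
    (by norm_num)

theorem differentiableOn_boettcherLogRatio (h : IsEscapeRadius f D R) (hD : 2 ≤ D)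
    (hf : Differentiable ℂ f) : DifferentiableOn ℂ (boettcherLogRatio f D) {w | R < ‖w‖} := by
  refine differentiableOn_tsum_of_summable_norm (summable_geometric_two.mul_left _)
    (fun k w hw => ?_) (isOpen_lt continuous_const continuous_norm)
    (fun k w hw => h.norm_log_div_pow_le hD hw k)
  have hwk : R ≤ ‖f^[k] w‖ := ((h.mapsTo hD le_rfl).iterate k hw).out.le
  have hratio : DifferentiableAt ℂ (fun y => f (f^[k] y) / f^[k] y ^ D) w :=
    ((hf _).comp w (hf.iterate k w)).div ((hf.iterate k w).pow D)
      (pow_ne_zero D (h.ne_zero hwk))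
  exact (((differentiableAt_log (h.mem_slitPlane hwk)).comp w hratio).div_const _)
    |>.differentiableWithinAt

theorem tendsto_log_norm_iterate_div_pow (h : IsEscapeRadius f D R) (hD : 2 ≤ D) {z : ℂ}
    (hz : R < ‖z‖) :
    Tendsto (fun n => Real.log ‖f^[n] z‖ / D ^ n) atTop
      (𝓝 (Real.log ‖z‖ + (boettcherLogRatio f D z).re)) := by
  set a : ℕ → ℝ := fun n => Real.log ‖f^[n] z‖ / D ^ n
  have hre : ∀ k, (log (f (f^[k] z) / f^[k] z ^ D) / (D ^ (k + 1) : ℕ)).re = a (k + 1) - a k := by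
    intro k
    have hk : R < ‖f^[k] z‖ := (h.mapsTo hD le_rfl).iterate k hz
    simp only [a, div_natCast_re, log_re, norm_div, norm_pow, Function.iterate_succ_apply']
    have hk1 : R < ‖f (f^[k] z)‖ := h.mapsTo hD le_rfl hk
    rw [Real.log_div (by linarith [h.two_le]) (pow_ne_zero _ (by linarith [h.two_le])),
      Real.log_pow]
    push_cast
    field_simp
    ring
  have hsum := hasSum_re (h.summable_log_div_pow hD hz).hasSum
  simp only [hre] at hsum
  have := hsum.tendsto_sum_nat.const_add (Real.log ‖z‖)
  refine this.congr fun n => ?_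
  rw [Finset.sum_range_sub]
  simp [a]

theorem green_eq (h : IsEscapeRadius f D R) (hD : 2 ≤ D) {G : ℂ → ℝ}
    (hG : ∀ z, Tendsto (fun n : ℕ => 1 / (D : ℝ) ^ n * max (Real.log ‖f^[n] z‖) 0) atTop
      (𝓝 (G z))) {z : ℂ} (hz : R < ‖z‖) :
    G z = Real.log ‖z‖ + (boettcherLogRatio f D z).re := by
  refine tendsto_nhds_unique (hG z) ((h.tendsto_log_norm_iterate_div_pow hD hz).congr fun n => ?_)
  have hn : 1 ≤ ‖f^[n] z‖ := by linarith [((h.mapsTo hD le_rfl).iterate n hz).out, h.two_le]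
  rw [max_eq_left (Real.log_nonneg hn), one_div_mul_eq_div]

theorem norm_deriv_boettcherLogRatio_lt (h : IsEscapeRadius f D R) (hD : 2 ≤ D)
    (hf : Differentiable ℂ f) {z : ℂ} (hz : 2 * R < ‖z‖) :
    ‖deriv (boettcherLogRatio f D) z‖ < ‖z⁻¹‖ := by
  set H := boettcherLogRatio f D
  have hR := h.two_le
  have hball : ball z (‖z‖ / 2) ⊆ {w | R < ‖w‖} := fun y hy => by
    have := norm_sub_norm_le z y
    rw [mem_ball, dist_eq_norm, ← norm_neg, neg_sub] at hy
    show R < ‖y‖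
    linarith
  have hmaps : MapsTo H (ball z (‖z‖ / 2)) (closedBall (H z) (3 / 8)) := fun y hy => by
    rw [mem_closedBall, dist_eq_norm]
    linarith [norm_sub_le (H y) (H z), h.norm_boettcherLogRatio_le hD (hball hy),
      h.norm_boettcherLogRatio_le hD (hball (mem_ball_self (by linarith)))]
  have := norm_deriv_le_div_of_mapsTo_ball
    ((h.differentiableOn_boettcherLogRatio hD hf).mono hball) hmaps (by linarith)
  rw [norm_inv]
  calc ‖deriv H z‖ ≤ 3 / 8 / (‖z‖ / 2) := this
    _ = 3 / 4 * ‖z‖⁻¹ := by ring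
    _ < ‖z‖⁻¹ := by linarith [inv_pos.2 (show 0 < ‖z‖ by linarith)]

theorem differentiableAt_and_fderiv_ne_zero (h : IsEscapeRadius f D R) (hD : 2 ≤ D)
    (hf : Differentiable ℂ f) {G : ℂ → ℝ}
    (hG : ∀ z, Tendsto (fun n : ℕ => 1 / (D : ℝ) ^ n * max (Real.log ‖f^[n] z‖) 0) atTop
      (𝓝 (G z))) {z : ℂ} (hz : 2 * R < ‖z‖) :
    DifferentiableAt ℝ G z ∧ fderiv ℝ G z ≠ 0 := by
  set H := boettcherLogRatio f D
  have hR := h.two_le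
  have hz0 : z ≠ 0 := h.ne_zero (by linarith)
  have hzU : {w : ℂ | R < ‖w‖} ∈ 𝓝 z :=
    (isOpen_lt continuous_const continuous_norm).mem_nhds (by show R < ‖z‖; linarith)
  have hH : HasDerivAt H (deriv H z) z :=
    ((h.differentiableOn_boettcherLogRatio hD hf).differentiableAt hzU).hasDerivAt
  -- `log (y / z)` is a branch of `log y` near `z`, so `G = Re (log ‖z‖ + log (y / z) + H)` there
  have hlog : HasDerivAt (fun y => log (y / z)) z⁻¹ z := by
    simpa [hz0] using ((hasDerivAt_id z).div_const z).clog (by simp [hz0])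
  refine ((hlog.const_add (Real.log ‖z‖ : ℂ)).add hH)
    |>.differentiableAt_and_fderiv_ne_zero_of_eventuallyEq_re ?_ ?_
  · intro hsum
    have := h.norm_deriv_boettcherLogRatio_lt hD hf hz
    rw [eq_neg_of_add_eq_zero_right hsum, norm_neg] at this
    exact this.false
  · filter_upwards [hzU] with y hy
    have hy0 : ‖y‖ ≠ 0 := by linarith [show R < ‖y‖ from hy]
    rw [h.green_eq hD hG hy]
    simp only [Pi.add_apply, add_re, ofReal_re, log_re, norm_div,
      Real.log_div hy0 (norm_ne_zero_iff.2 hz0), H]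
    ring

end IsEscapeRadius

theorem Polynomial.Monic.exists_isEscapeRadius {P : ℂ[X]} (hP : P.Monic) :
    ∃ R, IsEscapeRadius (fun w => P.eval w) P.natDegree R := by
  have hlim := P.tendsto_eval_div_pow_natDegree
  rw [hP.leadingCoeff] at hlim
  obtain ⟨R, -, hR⟩ := hasBasis_cobounded_norm.eventually_iff.1
    (hlim.eventually (closedBall_mem_nhds 1 (show (0 : ℝ) < 1 / 16 by norm_num)))
  refine ⟨max R 2, le_max_right _ _, fun w hw => ?_⟩
  simpa [mem_closedBall, dist_eq_norm] using hR (le_of_max_le_left hw)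

/-- Outside the filled Julia set, the derivative of `G` vanishes at `z`
iff some forward iterate of `z` is a critical point of `P`. -/
theorem green_critical_points (D : ℕ) (hD : 2 ≤ D) (P : Polynomial ℂ)
    (hmonic : P.Monic) (hdeg : P.natDegree = D) (G : ℂ → ℝ)
    (hG : ∀ z : ℂ, Tendsto (fun n : ℕ =>
        (1 / (D : ℝ) ^ n) *
          max (Real.log ‖(fun w => P.eval w)^[n] z‖) 0)
      atTop (𝓝 (G z))) :
    ∀ z : ℂ,
      ¬ Bornology.IsBounded (Set.range fun n : ℕ => (fun w => P.eval w)^[n] z) →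
      (fderiv ℝ G z = 0 ↔
        ∃ n : ℕ, (Polynomial.derivative P).eval ((fun w => P.eval w)^[n] z) = 0) := by
  intro z hz
  obtain ⟨R, hR⟩ := hmonic.exists_isEscapeRadius
  rw [hdeg] at hR
  have hf : Differentiable ℂ fun w => P.eval w := P.differentiable
  have hD0 : (D : ℝ) ≠ 0 := Nat.cast_ne_zero.2 (by omega)
  have hfG := eq_mul_of_tendsto_div_pow_iterate (u := fun w => max (Real.log ‖w‖) 0) hD0 hG
  have key : ∀ᶠ N in atTop, (fderiv ℝ G z = 0 ↔
      ∃ k < N, P.derivative.eval ((fun w => P.eval w)^[k] z) = 0) := by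
    filter_upwards [eventually_lt_norm_iterate_of_not_isBounded
      (hR.mapsTo hD (r := 2 * R) (by linarith [hR.two_le])) hz] with N hN
    obtain ⟨hdiff, hne⟩ := hR.differentiableAt_and_fderiv_ne_zero hD hf hG hN
    rw [fderiv_eq_zero_iff_of_map_eq_mul hD0 hfG
      (hasDerivAt_iterate hf N z) hdiff hne, Finset.prod_eq_zero_iff]
    simp only [Finset.mem_range, Polynomial.deriv]
  constructor
  · intro h0
    obtain ⟨N, hN⟩ := key.exists
    obtain ⟨k, -, hk⟩ := hN.1 h0
    exact ⟨k, hk⟩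
  · rintro ⟨n, hn⟩
    obtain ⟨N, hN, hnN⟩ := (key.and (eventually_gt_atTop n)).exists
    exact hN.2 ⟨n, hnN, hn⟩
end

section
/- Let D ≥ 2 be an integer and let (b_n)_{n≥0} be a strictly increasing sequence of real numbers that is bounded above, such that D·b_n − b_{n−1} ∈ ℤ for every n ≥ 1. Then the limit a := lim_{n→∞} b_n exists and satisfies (D−1)·a ∈ ℤ; that is, a is a fixed point of the map θ ↦ Dθ (mod ℤ) on ℝ/ℤ. -/
open Filter Topology

theorem exists_int_eq_of_tendsto_intCast {α : Type*} {l : Filter α} [l.NeBot] {u : α → ℝ}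
    {x : ℝ} (hu : Tendsto u l (𝓝 x)) (hint : ∀ i, ∃ k : ℤ, u i = k) : ∃ m : ℤ, x = m := by
  obtain ⟨m, hm⟩ := Int.isClosedEmbedding_coe_real.isClosed_range.mem_of_tendsto hu
    (Eventually.of_forall fun i => (hint i).imp fun _ h => h.symm)
  exact ⟨m, hm.symm⟩

theorem exists_int_sub_one_mul_eq_of_tendsto {D a : ℝ} {b : ℕ → ℝ}
    (hb : Tendsto b atTop (𝓝 a)) (hint : ∀ n, ∃ k : ℤ, D * b (n + 1) - b n = k) :
    ∃ m : ℤ, (D - 1) * a = m := by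
  have hlim : Tendsto (fun n => D * b (n + 1) - b n) atTop (𝓝 (D * a - a)) :=
    ((hb.comp (tendsto_add_atTop_nat 1)).const_mul D).sub hb
  obtain ⟨m, hm⟩ := exists_int_eq_of_tendsto_intCast hlim hint
  exact ⟨m, by rw [sub_one_mul, hm]⟩

theorem limit_is_fixed_angle_general (D : ℕ) (b : ℕ → ℝ)
    (hmono : StrictMono b) (hbdd : BddAbove (Set.range b))
    (hint : ∀ n : ℕ, ∃ k : ℤ, (D : ℝ) * b (n + 1) - b n = k) :
    ∃ a : ℝ, Tendsto b atTop (𝓝 a) ∧ ∃ m : ℤ, ((D : ℝ) - 1) * a = m := by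
  have hb := tendsto_atTop_ciSup hmono.monotone hbdd
  exact ⟨_, hb, exists_int_sub_one_mul_eq_of_tendsto hb hint⟩

/-- A bounded strictly increasing sequence `(b_n)` with
`D·b_n − b_{n−1} ∈ ℤ` for all `n ≥ 1` converges to a limit `a` with `(D−1)·a ∈ ℤ`,
i.e. `a` represents a fixed point of `θ ↦ Dθ (mod ℤ)`. -/
theorem limit_is_fixed_angle (D : ℕ) (hD : 2 ≤ D) (b : ℕ → ℝ)
    (hmono : StrictMono b) (hbdd : BddAbove (Set.range b))
    (hint : ∀ n : ℕ, ∃ k : ℤ, (D : ℝ) * b (n + 1) - b n = k) :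
    ∃ a : ℝ, Tendsto b atTop (𝓝 a) ∧ ∃ m : ℤ, ((D : ℝ) - 1) * a = m :=
  limit_is_fixed_angle_general D b hmono hbdd hint
end

section
/- Let c be a real number with c > 1/4 and consider the quadratic polynomial P(z) = z² + c on ℂ. Then the filled Julia set K_P = {z ∈ ℂ : the forward orbit {P^{∘n}(z)}_{n≥0} is bounded} is totally disconnected. -/
/-!
Since `x² + c ≥ x + (c - 1/4)`, no real point has a bounded orbit when `c > 1/4`, and as
`z ↦ z² + c` maps the imaginary axis into `ℝ`, orbits in `K` avoid both axes. Hence every iterate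
maps a connected subset of `K` into a single open quadrant. On a quadrant `z ↦ z²` is a conformal
isomorphism onto a half-plane, and it multiplies `|a - b|² / (|Im a| |Im b|)` by at least
`1 + Im a Im b / (Re a Re b)`. Along two orbits in `K` this factor is bounded below by a constant
`> 1` (`|Im|` is bounded away from `0` on the compact orbit closures), while the quantity itself
stays bounded, so the two orbits start at the same point.
-/

open Function Complex Bornology Set Filter

section BoundedOrbit

variable {α : Type*} {f : α → α}

def HasBoundedOrbit [Bornology α] (f : α → α) (z : α) : Prop :=
  IsBounded (range fun n : ℕ => f^[n] z)

theorem HasBoundedOrbit.iterate [Bornology α] {z : α} (h : HasBoundedOrbit f z) (m : ℕ) :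
    HasBoundedOrbit f (f^[m] z) :=
  IsBounded.subset h <| range_subset_iff.2 fun n => ⟨n + m, iterate_add_apply f n m z⟩

theorem HasBoundedOrbit.of_mem_closure [PseudoMetricSpace α] (hf : Continuous f) {z y : α}
    (hz : HasBoundedOrbit f z) (hy : y ∈ closure (range fun n : ℕ => f^[n] z)) :
    HasBoundedOrbit f y := by
  have hmaps : MapsTo f (closure (range fun n : ℕ => f^[n] z))
      (closure (range fun n : ℕ => f^[n] z)) := by
    refine MapsTo.closure ?_ hf
    rintro _ ⟨n, rfl⟩
    exact ⟨n + 1, iterate_succ_apply' f n z⟩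
  exact IsBounded.subset (IsBounded.closure hz) (range_subset_iff.2 fun n => hmaps.iterate n hy)

end BoundedOrbit

theorem IsPreconnected.mul_pos_of_ne_zero {X : Type*} [TopologicalSpace X] {t : Set X}
    (ht : IsPreconnected t) {φ : X → ℝ} (hφ : ContinuousOn φ t) (h0 : ∀ x ∈ t, φ x ≠ 0)
    {x y : X} (hx : x ∈ t) (hy : y ∈ t) : 0 < φ x * φ y := by
  by_contra! hxy
  have h0mem : (0 : ℝ) ∈ uIcc (φ x) (φ y) := by
    rcases mul_nonpos_iff.1 hxy with ⟨hpos, hneg⟩ | ⟨hneg, hpos⟩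
    · exact mem_uIcc.2 (Or.inr ⟨hneg, hpos⟩)
    · exact mem_uIcc.2 (Or.inl ⟨hneg, hpos⟩)
  obtain ⟨p, hp, hp0⟩ := (ht.image φ hφ).ordConnected.uIcc_subset
    (mem_image_of_mem φ hx) (mem_image_of_mem φ hy) h0mem
  exact h0 p hp hp0

theorem nonpos_of_mul_le_succ_of_bddAbove {u : ℕ → ℝ} {K : ℝ} (hK : 1 < K)
    (hu : ∀ n, K * u n ≤ u (n + 1)) (hb : BddAbove (range u)) : u 0 ≤ 0 := by
  by_contra! h0
  have hgeom : ∀ n, K ^ n * u 0 ≤ u n := fun n =>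
    geom_le (by linarith) n fun k _ => hu k
  refine not_bddAbove_of_tendsto_atTop
    ((tendsto_pow_atTop_atTop_of_one_lt hK).atTop_mul_const h0) ?_
  obtain ⟨B, hB⟩ := hb
  exact ⟨B, forall_mem_range.2 fun n => (hgeom n).trans (hB ⟨n, rfl⟩)⟩

theorem add_mul_le_iterate_sq_add (c x : ℝ) (n : ℕ) :
    x + n * (c - 1 / 4) ≤ (fun y : ℝ => y ^ 2 + c)^[n] x := by
  induction n with
  | zero => simp
  | succ n ih =>
    rw [iterate_succ_apply']
    push_cast
    nlinarith [sq_nonneg ((fun y : ℝ => y ^ 2 + c)^[n] x - 1 / 2)]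

def SameQuadrant (a b : ℂ) : Prop :=
  0 < a.re * b.re ∧ 0 < a.im * b.im

/-- For `a, b` in the upper half-plane this is `2 (cosh d - 1)`, with `d` their hyperbolic
distance. -/
noncomputable def hyperbolicGap (a b : ℂ) : ℝ :=
  normSq (a - b) / (|a.im| * |b.im|)

theorem hyperbolicGap_add_ofReal (a b : ℂ) (c : ℝ) :
    hyperbolicGap (a + c) (b + c) = hyperbolicGap a b := by
  simp [hyperbolicGap]

theorem SameQuadrant.mul_hyperbolicGap_le_hyperbolicGap_sq {a b : ℂ} (h : SameQuadrant a b) :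
    (1 + a.im * b.im / (a.re * b.re)) * hyperbolicGap a b ≤ hyperbolicGap (a ^ 2) (b ^ 2) := by
  obtain ⟨hp, hs⟩ := h
  have hden : |a.im| * |b.im| = a.im * b.im := by rw [← abs_mul, abs_of_pos hs]
  have hden_sq : |(a ^ 2).im| * |(b ^ 2).im| = 4 * (a.re * b.re) * (a.im * b.im) := by
    rw [← abs_mul, abs_of_pos (by simp only [sq, mul_im]; nlinarith)]
    simp only [sq, mul_im]
    ring
  have hsum : 4 * (a.re * b.re + a.im * b.im) ≤ normSq (a + b) := by
    simp only [normSq_apply, add_re, add_im]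
    nlinarith [sq_nonneg (a.re - b.re), sq_nonneg (a.im - b.im)]
  have hfactor : normSq (a ^ 2 - b ^ 2) = normSq (a - b) * normSq (a + b) := by
    rw [← normSq_mul]
    ring_nf
  rw [hyperbolicGap, hyperbolicGap, hden, hden_sq, hfactor]
  calc (1 + a.im * b.im / (a.re * b.re)) * (normSq (a - b) / (a.im * b.im))
      = normSq (a - b) * (4 * (a.re * b.re + a.im * b.im)) /
          (4 * (a.re * b.re) * (a.im * b.im)) := by
        generalize a.re * b.re = p at hp ⊢
        generalize a.im * b.im = s at hs ⊢
        field_simp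
    _ ≤ normSq (a - b) * normSq (a + b) / (4 * (a.re * b.re) * (a.im * b.im)) :=
        div_le_div_of_nonneg_right (mul_le_mul_of_nonneg_left hsum (normSq_nonneg _))
          (by positivity)

theorem SameQuadrant.sq_div_sq_le_im_mul_im_div_re_mul_re {a b : ℂ} (h : SameQuadrant a b)
    {δ R : ℝ} (ha : δ ≤ |a.im|) (hb : δ ≤ |b.im|) (hδ : 0 ≤ δ) (ha' : ‖a‖ ≤ R) (hb' : ‖b‖ ≤ R) :
    δ ^ 2 / R ^ 2 ≤ a.im * b.im / (a.re * b.re) := by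
  obtain ⟨hp, hs⟩ := h
  have him : δ ^ 2 ≤ a.im * b.im := by
    rw [← abs_of_pos hs, abs_mul, sq]
    exact mul_le_mul ha hb hδ (abs_nonneg _)
  have hre : a.re * b.re ≤ R ^ 2 := by
    rw [← abs_of_pos hp, abs_mul, sq]
    exact mul_le_mul ((abs_re_le_norm a).trans ha') ((abs_re_le_norm b).trans hb')
      (abs_nonneg _) ((norm_nonneg a).trans ha')
  exact div_le_div₀ hs.le him hp hre

theorem hyperbolicGap_le {a b : ℂ} {δ R : ℝ} (hδ : 0 < δ) (ha : δ ≤ |a.im|) (hb : δ ≤ |b.im|)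
    (ha' : ‖a‖ ≤ R) (hb' : ‖b‖ ≤ R) : hyperbolicGap a b ≤ (2 * R) ^ 2 / δ ^ 2 := by
  have hnum : normSq (a - b) ≤ (2 * R) ^ 2 := by
    rw [normSq_eq_norm_sq]
    gcongr
    calc ‖a - b‖ ≤ ‖a‖ + ‖b‖ := norm_sub_le a b
      _ ≤ 2 * R := by linarith
  rw [sq δ]
  exact div_le_div₀ (by positivity) hnum (by positivity) (mul_le_mul ha hb hδ.le (abs_nonneg _))

section Quadratic

def quadraticMap (c : ℝ) (z : ℂ) : ℂ := z ^ 2 + c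

variable {c : ℝ}

theorem continuous_quadraticMap (c : ℝ) : Continuous (quadraticMap c) :=
  (continuous_pow 2).add continuous_const

theorem quadraticMap_iterate_ofReal (c x : ℝ) (n : ℕ) :
    (quadraticMap c)^[n] x = ((fun y : ℝ => y ^ 2 + c)^[n] x : ℝ) :=
  (Semiconj.iterate_right (f := ofReal) (fun y => by simp [quadraticMap]) n x).symm

theorem not_hasBoundedOrbit_ofReal (hc : 1 / 4 < c) (x : ℝ) :
    ¬ HasBoundedOrbit (quadraticMap c) x := by
  intro h
  obtain ⟨M, hM⟩ := IsBounded.exists_norm_le h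
  obtain ⟨n, hn⟩ := exists_nat_gt ((M - x) / (c - 1 / 4))
  have hle : ‖(quadraticMap c)^[n] x‖ ≤ M := hM _ ⟨n, rfl⟩
  rw [quadraticMap_iterate_ofReal, norm_real, Real.norm_eq_abs] at hle
  rw [div_lt_iff₀ (by linarith)] at hn
  linarith [le_abs_self ((fun y : ℝ => y ^ 2 + c)^[n] x), add_mul_le_iterate_sq_add c x n]

theorem HasBoundedOrbit.im_ne_zero (hc : 1 / 4 < c) {z : ℂ}
    (h : HasBoundedOrbit (quadraticMap c) z) : z.im ≠ 0 := by
  intro h0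
  have hz : z = (z.re : ℂ) := Complex.ext (by simp) (by simp [h0])
  exact not_hasBoundedOrbit_ofReal hc z.re (hz ▸ h)

theorem HasBoundedOrbit.re_ne_zero (hc : 1 / 4 < c) {z : ℂ}
    (h : HasBoundedOrbit (quadraticMap c) z) : z.re ≠ 0 := by
  intro h0
  apply (h.iterate 1).im_ne_zero hc
  simp [quadraticMap, sq, h0]

theorem HasBoundedOrbit.exists_pos_le_abs_im (hc : 1 / 4 < c) {z : ℂ}
    (h : HasBoundedOrbit (quadraticMap c) z) :
    ∃ δ > 0, ∀ n, δ ≤ |((quadraticMap c)^[n] z).im| := by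
  obtain ⟨δ, hδ, hle⟩ := (IsBounded.isCompact_closure h).exists_forall_le'
    continuous_im.abs.continuousOn
    fun y hy => abs_pos.2 ((h.of_mem_closure (continuous_quadraticMap c) hy).im_ne_zero hc)
  exact ⟨δ, hδ, fun n => hle _ (subset_closure ⟨n, rfl⟩)⟩

theorem eq_of_forall_sameQuadrant_iterate (hc : 1 / 4 < c) {z w : ℂ}
    (hz : HasBoundedOrbit (quadraticMap c) z) (hw : HasBoundedOrbit (quadraticMap c) w)
    (hq : ∀ n, SameQuadrant ((quadraticMap c)^[n] z) ((quadraticMap c)^[n] w)) : z = w := by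
  set F := quadraticMap c
  obtain ⟨δz, hδz, hz_im⟩ := hz.exists_pos_le_abs_im hc
  obtain ⟨δw, hδw, hw_im⟩ := hw.exists_pos_le_abs_im hc
  obtain ⟨R, hR, hR_norm⟩ := IsBounded.exists_pos_norm_le (IsBounded.union hz hw)
  set δ := min δz δw
  have hδ : 0 < δ := lt_min hδz hδw
  have hz_δ n : δ ≤ |(F^[n] z).im| := (min_le_left _ _).trans (hz_im n)
  have hw_δ n : δ ≤ |(F^[n] w).im| := (min_le_right _ _).trans (hw_im n)
  have hz_R n : ‖F^[n] z‖ ≤ R := hR_norm _ (Or.inl ⟨n, rfl⟩)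
  have hw_R n : ‖F^[n] w‖ ≤ R := hR_norm _ (Or.inr ⟨n, rfl⟩)
  have hexpand n : (1 + δ ^ 2 / R ^ 2) * hyperbolicGap (F^[n] z) (F^[n] w) ≤
      hyperbolicGap (F^[n + 1] z) (F^[n + 1] w) := by
    rw [iterate_succ_apply', iterate_succ_apply']
    refine le_trans ?_ ((hq n).mul_hyperbolicGap_le_hyperbolicGap_sq.trans
      (hyperbolicGap_add_ofReal _ _ c).ge)
    refine mul_le_mul_of_nonneg_right (add_le_add_right ?_ 1)
      (div_nonneg (normSq_nonneg _) (by positivity))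
    exact (hq n).sq_div_sq_le_im_mul_im_div_re_mul_re (hz_δ n) (hw_δ n) hδ.le (hz_R n) (hw_R n)
  have hbdd : BddAbove (range fun n => hyperbolicGap (F^[n] z) (F^[n] w)) :=
    ⟨_, forall_mem_range.2 fun n => hyperbolicGap_le hδ (hz_δ n) (hw_δ n) (hz_R n) (hw_R n)⟩
  by_contra hzw
  have hgap : 0 < hyperbolicGap z w :=
    div_pos (normSq_pos.2 (sub_ne_zero.2 hzw))
      (mul_pos (abs_pos.2 (hz.im_ne_zero hc)) (abs_pos.2 (hw.im_ne_zero hc)))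
  exact hgap.not_ge
    (nonpos_of_mul_le_succ_of_bddAbove (lt_add_of_pos_right 1 (by positivity)) hexpand hbdd)

end Quadratic

/-- For real `c > 1/4`, the filled Julia set of `z ↦ z² + c` is
totally disconnected. -/
theorem filled_julia_totally_disconnected (c : ℝ) (hc : 1 / 4 < c) :
    IsTotallyDisconnected
      {z : ℂ |
        Bornology.IsBounded
          (Set.range fun n : ℕ => (fun w : ℂ => w ^ 2 + (c : ℂ))^[n] z)} := by
  intro t htK ht z hz w hw
  have hK : ∀ u ∈ t, ∀ n, HasBoundedOrbit (quadraticMap c) ((quadraticMap c)^[n] u) :=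
    fun u hu n => HasBoundedOrbit.iterate (f := quadraticMap c) (z := u) (htK hu) n
  refine eq_of_forall_sameQuadrant_iterate hc (htK hz) (htK hw) fun n => ⟨?_, ?_⟩
  · exact ht.mul_pos_of_ne_zero
      (continuous_re.comp ((continuous_quadraticMap c).iterate n)).continuousOn
      (fun u hu => (hK u hu n).re_ne_zero hc) hz hw
  · exact ht.mul_pos_of_ne_zero
      (continuous_im.comp ((continuous_quadraticMap c).iterate n)).continuousOn
      (fun u hu => (hK u hu n).im_ne_zero hc) hz hw
end
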